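/- arXiv:2410.02593 — 5 statements merged into one kernel-verified Lean document; each statement's English description precedes it below -/
import Mathlib

section
/- Let S be a dense subsemigroup of ((0,∞), +), viewed as a discrete semigroup, and let 0⁺ = ⋂_{ε>0} cl_{βS_d}(S ∩ (0,ε)). Then 0⁺ is a nonempty compact subsemigroup of (βS_d, +). -/
/-!
`0⁺` is the set of ultrafilters finer than the filter `F` generated by the sets `S ∩ (0,ε)`.
The ultrafilters finer than a given filter always form a closed, hence compact, set, which is
nonempty as soon as the filter is proper; density makes `F` proper. The set is closed under `+`
because the ultrafilter sum `p + q` is finer than the pointwise filter sum `↑p + ↑q`, and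
`F + F ≤ F` since `S ∩ (0,ε/2) + S ∩ (0,ε/2) ⊆ S ∩ (0,ε)`.
-/

attribute [local instance] Ultrafilter.add

/-- `0⁺` for a dense subsemigroup `S` of `((0,∞),+)`: ultrafilters (on `ℝ`, concentrated
on `S`) containing `S ∩ (0,ε)` for every `ε > 0`. -/
def zeroPlusAdd (S : Set ℝ) : Set (Ultrafilter ℝ) :=
  {p | ∀ ε : ℝ, 0 < ε → {x | x ∈ S ∧ x < ε} ∈ p}

open Filter Set
open scoped Pointwise

namespace Ultrafilter

theorem isClosed_setOf_coe_le {α : Type*} (F : Filter α) :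
    IsClosed {p : Ultrafilter α | ↑p ≤ F} := by
  have h : {p : Ultrafilter α | ↑p ≤ F} = ⋂ s ∈ F, {p | s ∈ p} := by
    ext p
    simp [Filter.le_def]
  rw [h]
  exact isClosed_biInter fun s _ => ultrafilter_isClosed_basic s

theorem coe_add_le {M : Type*} [Add M] (p q : Ultrafilter M) :
    (↑(p + q) : Filter M) ≤ ↑p + ↑q := by
  intro A hA
  obtain ⟨B, hB, C, hC, hBC⟩ := mem_add.1 hA
  refine (eventually_add p q (· ∈ A)).2 ?_
  filter_upwards [hB] with x hx
  filter_upwards [hC] with y hy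
  exact hBC (add_mem_add hx hy)

end Ultrafilter

def zeroPlusFilter (S : Set ℝ) : Filter ℝ :=
  ⨅ ε > (0 : ℝ), 𝓟 {x | x ∈ S ∧ x < ε}

theorem hasBasis_zeroPlusFilter (S : Set ℝ) :
    (zeroPlusFilter S).HasBasis (fun ε => 0 < ε) fun ε => {x | x ∈ S ∧ x < ε} :=
  hasBasis_biInf_principal'
    (fun a ha b hb => ⟨min a b, lt_min ha hb,
      fun _ hx => ⟨hx.1, hx.2.trans_le (min_le_left a b)⟩,
      fun _ hx => ⟨hx.1, hx.2.trans_le (min_le_right a b)⟩⟩)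
    ⟨1, one_pos⟩

theorem zeroPlusAdd_eq_setOf_coe_le (S : Set ℝ) :
    zeroPlusAdd S = {p : Ultrafilter ℝ | ↑p ≤ zeroPlusFilter S} := by
  ext p
  exact (hasBasis_zeroPlusFilter S).ge_iff.symm

theorem zeroPlusFilter_neBot {S : Set ℝ} (hS : ∀ ε > 0, ∃ s ∈ S, s < ε) :
    (zeroPlusFilter S).NeBot :=
  (hasBasis_zeroPlusFilter S).neBot_iff.2 fun hε => hS _ hε

theorem zeroPlusFilter_add_le {S : Set ℝ} (hS : ∀ x ∈ S, ∀ y ∈ S, x + y ∈ S) :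
    zeroPlusFilter S + zeroPlusFilter S ≤ zeroPlusFilter S := by
  have hbasis := hasBasis_zeroPlusFilter S
  refine hbasis.ge_iff.2 fun ε hε => mem_add.2
    ⟨_, hbasis.mem_of_mem (half_pos hε), _, hbasis.mem_of_mem (half_pos hε), ?_⟩
  rintro _ ⟨x, hx, y, hy, rfl⟩
  exact ⟨hS x hx.1 y hy.1, by linarith [hx.2, hy.2]⟩

theorem zeroPlusAdd_nonempty_compact_subsemigroup_general (S : Set ℝ)
    (hSadd : ∀ x ∈ S, ∀ y ∈ S, x + y ∈ S)
    (hSdense : ∀ a b : ℝ, 0 ≤ a → a < b → ∃ s ∈ S, s ∈ Set.Ioo a b) :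
    (zeroPlusAdd S).Nonempty ∧ IsCompact (zeroPlusAdd S) ∧
      ∀ p ∈ zeroPlusAdd S, ∀ q ∈ zeroPlusAdd S, p + q ∈ zeroPlusAdd S := by
  rw [zeroPlusAdd_eq_setOf_coe_le]
  refine ⟨?_, (Ultrafilter.isClosed_setOf_coe_le _).isCompact, fun p hp q hq => ?_⟩
  · have : (zeroPlusFilter S).NeBot := zeroPlusFilter_neBot fun ε hε =>
      let ⟨s, hs, hsε⟩ := hSdense 0 ε le_rfl hε
      ⟨s, hs, hsε.2⟩
    exact Ultrafilter.exists_le _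
  · exact (Ultrafilter.coe_add_le p q).trans
      ((add_le_add hp hq).trans (zeroPlusFilter_add_le hSadd))

/-- For `S` a dense subsemigroup of `((0,∞),+)`, the set `0⁺` is a nonempty compact
subsemigroup of `(βS_d, +)`. -/
theorem zeroPlusAdd_nonempty_compact_subsemigroup (S : Set ℝ)
    (hSpos : ∀ x ∈ S, 0 < x)
    (hSadd : ∀ x ∈ S, ∀ y ∈ S, x + y ∈ S)
    (hSdense : ∀ a b : ℝ, 0 ≤ a → a < b → ∃ s ∈ S, s ∈ Set.Ioo a b) :
    (zeroPlusAdd S).Nonempty ∧ IsCompact (zeroPlusAdd S) ∧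
      ∀ p ∈ zeroPlusAdd S, ∀ q ∈ zeroPlusAdd S, p + q ∈ zeroPlusAdd S :=
  zeroPlusAdd_nonempty_compact_subsemigroup_general S hSadd hSdense
end

section
/- Let (S,+) be a dense subsemigroup of ((0,∞),+) and let p be an idempotent ultrafilter in 0⁺ (i.e., p + p = p and S ∩ (0,ε) ∈ p for all ε > 0). Fix ε > 0, k, r ≥ 1, and a partition [S ∩ (0,ε)]^k = A₁ ∪ … ∪ A_r. Then there exist i ∈ {1,…,r} and a tree T ⊆ (S ∩ (0,ε))^{<ω} such that for every f ∈ T: (1) T(f) = {s : f⌢s ∈ T} ∈ p, and (2) for every choice of finite nonempty sets α₁ < α₂ < … < α_k of indices contained in dom f, the k-element set {Σ_{t∈α₁} f(t), Σ_{t∈α₂} f(t), …, Σ_{t∈α_k} f(t)} belongs to A_i. -/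
attribute [local instance] Ultrafilter.add

namespace MTL

open Finset

attribute [local instance] Classical.propDecidable

theorem mem_add_iff (p q : Ultrafilter ℝ) (A : Set ℝ) :
    A ∈ p + q ↔ {x | {y | x + y ∈ A} ∈ q} ∈ p := by
  have := Ultrafilter.eventually_add p q (· ∈ A)
  simpa [Filter.eventually_iff, Ultrafilter.mem_coe] using this

def st (p : Ultrafilter ℝ) (A : Set ℝ) : Set ℝ := {x | x ∈ A ∧ {y | x + y ∈ A} ∈ p}

theorem st_subset (p : Ultrafilter ℝ) (A : Set ℝ) : st p A ⊆ A := fun _ hx => hx.1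

theorem st_mem {p : Ultrafilter ℝ} (hidem : p + p = p) {A : Set ℝ} (hA : A ∈ p) :
    st p A ∈ p := by
  have h1 : {x | {y | x + y ∈ A} ∈ p} ∈ p := by
    rw [← mem_add_iff, hidem]; exact hA
  exact Filter.inter_mem hA h1

theorem st_trans {p : Ultrafilter ℝ} (hidem : p + p = p) {A : Set ℝ} (hA : A ∈ p)
    {x : ℝ} (hx : x ∈ st p A) : {y | x + y ∈ st p A} ∈ p := by
  obtain ⟨hx1, hx2⟩ := hx
  have h3 : {y | {z | y + z ∈ {y | x + y ∈ A}} ∈ p} ∈ p := by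
    rw [← mem_add_iff, hidem]; exact hx2
  have : {y | x + y ∈ A} ∩ {y | {z | y + z ∈ {y | x + y ∈ A}} ∈ p} ⊆ {y | x + y ∈ st p A} := by
    rintro y ⟨hy1, hy2⟩
    refine ⟨hy1, ?_⟩
    apply Filter.mem_of_superset hy2
    intro z hz
    simpa [add_assoc] using hz
  exact Filter.mem_of_superset (Filter.inter_mem hx2 h3) this

theorem exists_pcolor (p : Ultrafilter ℝ) {r : ℕ} (φ : ℝ → Fin r) :
    ∃ i, {x | φ x = i} ∈ p := by
  obtain ⟨i, -, hi⟩ :=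
    Ultrafilter.eq_pure_of_finite_mem (f := p.map φ) Set.finite_univ Filter.univ_mem
  refine ⟨i, ?_⟩
  have : {i} ∈ p.map φ := by rw [hi]; exact Filter.mem_pure.mpr rfl
  have := Ultrafilter.mem_map.mp this
  simpa [Set.preimage, Set.mem_singleton_iff] using this

noncomputable def col (p : Ultrafilter ℝ) {r : ℕ} (A : Fin r → Set (Finset ℝ)) (hr : 0 < r) :
    ℕ → Finset ℝ → Fin r
  | 0, E => if h : ∃ i, E ∈ A i then h.choose else ⟨0, hr⟩
  | n + 1, E => (exists_pcolor p (fun x => col p A hr n (insert x E))).choose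

theorem col_zero {p : Ultrafilter ℝ} {r : ℕ} {A : Fin r → Set (Finset ℝ)} {hr : 0 < r}
    {E : Finset ℝ} (h : ∃ i, E ∈ A i) : E ∈ A (col p A hr 0 E) := by
  simp only [col, dif_pos h]; exact h.choose_spec

theorem col_succ (p : Ultrafilter ℝ) {r : ℕ} (A : Fin r → Set (Finset ℝ)) (hr : 0 < r)
    (n : ℕ) (E : Finset ℝ) :
    {x | col p A hr n (insert x E) = col p A hr (n + 1) E} ∈ p :=
  (exists_pcolor p (fun x => col p A hr n (insert x E))).choose_spec


/-! ### Block sums and chains -/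

def bsum (f : List ℝ) (β : Finset ℕ) : ℝ := ∑ t ∈ β, f.getD t 0

def total (f : List ℝ) : ℝ := ∑ t ∈ range f.length, f.getD t 0

/-- chains of `m` nonempty, increasing blocks inside `dom f` -/
def Chn (f : List ℝ) (m : ℕ) (α : ℕ → Finset ℕ) : Prop :=
  (∀ j, j < m → (α j).Nonempty) ∧ (∀ j, j < m → ∀ t ∈ α j, t < f.length) ∧
  (∀ j₁ j₂, j₁ < j₂ → j₂ < m → ∀ s ∈ α j₁, ∀ t ∈ α j₂, s < t)

noncomputable def Esum (f : List ℝ) (α : ℕ → Finset ℕ) (m : ℕ) : Finset ℝ :=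
  (range m).image fun j => bsum f (α j)

theorem chn_mono {f : List ℝ} {m m' : ℕ} {α : ℕ → Finset ℕ} (h : m ≤ m')
    (hc : Chn f m' α) : Chn f m α :=
  ⟨fun j hj => hc.1 j (lt_of_lt_of_le hj h), fun j hj => hc.2.1 j (lt_of_lt_of_le hj h),
   fun j₁ j₂ h12 h2 => hc.2.2 j₁ j₂ h12 (lt_of_lt_of_le h2 h)⟩

theorem getD_mem {f : List ℝ} {t : ℕ} (h : t < f.length) : f.getD t 0 ∈ f := by
  rw [List.getD_eq_getElem _ _ h]; exact List.getElem_mem h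

theorem Esum_succ (f : List ℝ) (α : ℕ → Finset ℕ) (m : ℕ) :
    Esum f α (m + 1) = insert (bsum f (α m)) (Esum f α m) := by
  simp [Esum, range_add_one, image_insert]

section
variable {S : Set ℝ}

theorem entry_pos (hSpos : ∀ x ∈ S, 0 < x) {f : List ℝ} (hfS : ∀ x ∈ f, x ∈ S)
    {t : ℕ} (h : t < f.length) : 0 < f.getD t 0 :=
  hSpos _ (hfS _ (getD_mem h))

theorem bsum_mem_S (hSadd : ∀ x ∈ S, ∀ y ∈ S, x + y ∈ S) {f : List ℝ}
    (hfS : ∀ x ∈ f, x ∈ S) {β : Finset ℕ} (hne : β.Nonempty)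
    (hlt : ∀ t ∈ β, t < f.length) : bsum f β ∈ S := by
  classical
  induction β using Finset.induction_on with
  | empty => simp at hne
  | @insert a β ha ih =>
    rw [bsum, Finset.sum_insert ha]
    have haS : f.getD a 0 ∈ S := hfS _ (getD_mem (hlt a (mem_insert_self a β)))
    rcases β.eq_empty_or_nonempty with rfl | hβ
    · simpa using haS
    · exact hSadd _ haS _ (ih hβ fun t ht => hlt t (mem_insert_of_mem ht))

theorem bsum_pos (hSpos : ∀ x ∈ S, 0 < x) {f : List ℝ} (hfS : ∀ x ∈ f, x ∈ S)
    {β : Finset ℕ} (hne : β.Nonempty) (hlt : ∀ t ∈ β, t < f.length) :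
    0 < bsum f β :=
  Finset.sum_pos (fun t ht => entry_pos hSpos hfS (hlt t ht)) hne

theorem bsum_le_total (hSpos : ∀ x ∈ S, 0 < x) {f : List ℝ} (hfS : ∀ x ∈ f, x ∈ S)
    {β : Finset ℕ} (hlt : ∀ t ∈ β, t < f.length) : bsum f β ≤ total f := by
  apply Finset.sum_le_sum_of_subset_of_nonneg
  · intro t ht; exact mem_range.mpr (hlt t ht)
  · intro t ht _; exact le_of_lt (entry_pos hSpos hfS (mem_range.mp ht))

/-- with a superdecreasing list, a block entirely after another one has smaller sum -/
theorem bsum_lt (hSpos : ∀ x ∈ S, 0 < x) {f : List ℝ} (hfS : ∀ x ∈ f, x ∈ S)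
    (hsd : ∀ n, n < f.length → (∑ t ∈ Ico (n + 1) f.length, f.getD t 0) < f.getD n 0)
    {β₁ β₂ : Finset ℕ} (hne₁ : β₁.Nonempty) (hne₂ : β₂.Nonempty)
    (hlt₁ : ∀ t ∈ β₁, t < f.length) (hlt₂ : ∀ t ∈ β₂, t < f.length)
    (hord : ∀ s ∈ β₁, ∀ t ∈ β₂, s < t) : bsum f β₂ < bsum f β₁ := by
  set b := β₁.max' hne₁ with hb
  have hbβ : b ∈ β₁ := β₁.max'_mem hne₁
  have hblen : b < f.length := hlt₁ b hbβ
  have h1 : bsum f β₂ ≤ ∑ t ∈ Ico (b + 1) f.length, f.getD t 0 := by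
    apply Finset.sum_le_sum_of_subset_of_nonneg
    · intro t ht
      exact mem_Ico.mpr ⟨hord b hbβ t ht, hlt₂ t ht⟩
    · intro t ht _; exact le_of_lt (entry_pos hSpos hfS (mem_Ico.mp ht).2)
  have h2 : f.getD b 0 ≤ bsum f β₁ := by
    apply Finset.single_le_sum (f := fun t => f.getD t 0) _ hbβ
    intro t ht; exact le_of_lt (entry_pos hSpos hfS (hlt₁ t ht))
  exact lt_of_le_of_lt h1 (lt_of_lt_of_le (hsd b hblen) h2)

theorem chain_anti (hSpos : ∀ x ∈ S, 0 < x) {f : List ℝ} (hfS : ∀ x ∈ f, x ∈ S)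
    (hsd : ∀ n, n < f.length → (∑ t ∈ Ico (n + 1) f.length, f.getD t 0) < f.getD n 0)
    {m : ℕ} {α : ℕ → Finset ℕ} (hc : Chn f m α) {j₁ j₂ : ℕ} (h12 : j₁ < j₂) (h2 : j₂ < m) :
    bsum f (α j₂) < bsum f (α j₁) :=
  bsum_lt hSpos hfS hsd (hc.1 j₁ (h12.trans h2)) (hc.1 j₂ h2)
    (hc.2.1 j₁ (h12.trans h2)) (hc.2.1 j₂ h2) (hc.2.2 j₁ j₂ h12 h2)

theorem Esum_card (hSpos : ∀ x ∈ S, 0 < x) {f : List ℝ} (hfS : ∀ x ∈ f, x ∈ S)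
    (hsd : ∀ n, n < f.length → (∑ t ∈ Ico (n + 1) f.length, f.getD t 0) < f.getD n 0)
    {m : ℕ} {α : ℕ → Finset ℕ} (hc : Chn f m α) : (Esum f α m).card = m := by
  rw [Esum, Finset.card_image_of_injOn, card_range]
  intro j₁ h1 j₂ h2 he
  by_contra hne
  rcases Nat.lt_or_ge j₁ j₂ with h | h
  · exact absurd he (ne_of_gt (chain_anti hSpos hfS hsd hc h (mem_range.mp h2)))
  · have h' : j₂ < j₁ := lt_of_le_of_ne h (Ne.symm hne)
    exact absurd he (ne_of_lt (chain_anti hSpos hfS hsd hc h' (mem_range.mp h1)))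

end


/-! ### The tree -/

section
variable (S : Set ℝ) (p : Ultrafilter ℝ) {r : ℕ} (A : Fin r → Set (Finset ℝ)) (hr : 0 < r)
  (k : ℕ) (ε : ℝ)

def Bset (E : Finset ℝ) : Set ℝ :=
  {x | col p A hr (k - E.card - 1) (insert x E) = col p A hr k ∅}

def Tset : Set (List ℝ) :=
  { f | (∀ x ∈ f, x ∈ S) ∧ total f < ε ∧
        (∀ n, n < f.length → (∑ t ∈ Ico (n + 1) f.length, f.getD t 0) < f.getD n 0) ∧
        (∀ m α, m < k → Chn f (m + 1) α →
          bsum f (α m) ∈ st p (Bset p A hr k (Esum f α m))) }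

variable {S p A hr k ε}

theorem chain_color (hSpos : ∀ x ∈ S, 0 < x) {f : List ℝ} (hf : f ∈ Tset S p A hr k ε) {m : ℕ} (hm : m ≤ k)
    {α : ℕ → Finset ℕ} (hc : Chn f m α) :
    col p A hr (k - m) (Esum f α m) = col p A hr k ∅ := by
  induction m with
  | zero => simp [Esum]
  | succ m ih =>
    have hm' : m < k := hm
    have hc' : Chn f m α := chn_mono (Nat.le_succ m) hc
    have hcol : col p A hr (k - m) (Esum f α m) = col p A hr k ∅ :=
      ih (le_of_lt hm') hc'
    have hB := hf.2.2.2 m α hm' hc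
    have hBmem : bsum f (α m) ∈ Bset p A hr k (Esum f α m) := st_subset _ _ hB
    have hcard : (Esum f α m).card = m := Esum_card hSpos hf.1 hf.2.2.1 hc'
    rw [Esum_succ]
    have : k - (m + 1) = k - (Esum f α m).card - 1 := by omega
    rw [this]
    exact hBmem

theorem Bset_mem (hSpos : ∀ x ∈ S, 0 < x) (hidem : p + p = p) {f : List ℝ} (hf : f ∈ Tset S p A hr k ε) {m : ℕ}
    (hm : m < k) {α : ℕ → Finset ℕ} (hc : Chn f m α) :
    Bset p A hr k (Esum f α m) ∈ p := by
  have hcard : (Esum f α m).card = m := Esum_card hSpos hf.1 hf.2.2.1 hc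
  have hcol : col p A hr (k - m) (Esum f α m) = col p A hr k ∅ :=
    chain_color hSpos hf (le_of_lt hm) hc
  have hsucc := col_succ p A hr (k - m - 1) (Esum f α m)
  have hkm : k - m - 1 + 1 = k - m := by omega
  apply Filter.mem_of_superset hsucc
  intro x hx
  simp only [Set.mem_setOf_eq] at hx ⊢
  rw [Bset, Set.mem_setOf_eq, hcard]
  rw [hkm] at hx
  rw [hx, hcol]

end


/-! ### getD helpers -/

theorem getD_app {f : List ℝ} {s : ℝ} {t : ℕ} (h : t < f.length) :
    (f ++ [s]).getD t 0 = f.getD t 0 := by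
  rw [List.getD_eq_getElem _ _ (by simp; omega), List.getD_eq_getElem _ _ h]
  exact List.getElem_append_left h

theorem getD_app_len (f : List ℝ) (s : ℝ) : (f ++ [s]).getD f.length 0 = s := by
  rw [List.getD_eq_getElem _ _ (by simp)]; simp

theorem getD_take {f : List ℝ} {n t : ℕ} (h : t < (f.take n).length) :
    (f.take n).getD t 0 = f.getD t 0 := by
  rw [List.getD_eq_getElem _ _ h, List.getD_eq_getElem _ _ (by simp at h; omega)]
  exact List.getElem_take

/-! ### Closure properties of the tree -/

section
variable {S : Set ℝ} {p : Ultrafilter ℝ} {r : ℕ} {A : Fin r → Set (Finset ℝ)} {hr : 0 < r}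
  {k : ℕ} {ε : ℝ}

theorem nil_mem (hε : 0 < ε) : ([] : List ℝ) ∈ Tset S p A hr k ε := by
  refine ⟨by simp, by simpa [total], by simp, ?_⟩
  intro m α _ hc
  obtain ⟨t, ht⟩ := hc.1 m (Nat.lt_succ_self m)
  have := hc.2.1 m (Nat.lt_succ_self m) t ht
  simp at this

theorem take_mem (hSpos : ∀ x ∈ S, 0 < x) {f : List ℝ} (hf : f ∈ Tset S p A hr k ε)
    (n : ℕ) : f.take n ∈ Tset S p A hr k ε := by
  obtain ⟨hf1, hf2, hf3, hf4⟩ := hf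
  set g := f.take n with hg
  have hglen : g.length ≤ f.length := by simp [hg]
  have hgD : ∀ t, t < g.length → g.getD t 0 = f.getD t 0 := fun t ht => getD_take ht
  have hgS : ∀ x ∈ g, x ∈ S := fun x hx => hf1 x (List.take_subset n f hx)
  have hbsum : ∀ β : Finset ℕ, (∀ t ∈ β, t < g.length) → bsum g β = bsum f β := by
    intro β hβ
    exact Finset.sum_congr rfl fun t ht => hgD t (hβ t ht)
  refine ⟨hgS, ?_, ?_, ?_⟩
  · calc total g = ∑ t ∈ range g.length, f.getD t 0 :=
          Finset.sum_congr rfl fun t ht => hgD t (mem_range.mp ht)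
      _ ≤ total f := by
          apply Finset.sum_le_sum_of_subset_of_nonneg (by gcongr)
          intro t ht _
          exact le_of_lt (entry_pos hSpos hf1 (mem_range.mp ht))
      _ < ε := hf2
  · intro n' hn'
    have h1 : (∑ t ∈ Ico (n' + 1) g.length, g.getD t 0)
        = ∑ t ∈ Ico (n' + 1) g.length, f.getD t 0 :=
      Finset.sum_congr rfl fun t ht => hgD t (mem_Ico.mp ht).2
    have h2 : (∑ t ∈ Ico (n' + 1) g.length, f.getD t 0)
        ≤ ∑ t ∈ Ico (n' + 1) f.length, f.getD t 0 := by
      apply Finset.sum_le_sum_of_subset_of_nonneg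
      · exact Finset.Ico_subset_Ico le_rfl hglen
      · intro t ht _
        exact le_of_lt (entry_pos hSpos hf1 (mem_Ico.mp ht).2)
    rw [h1, hgD n' hn']
    exact lt_of_le_of_lt h2 (hf3 n' (lt_of_lt_of_le hn' hglen))
  · intro m α hm hc
    have hc' : Chn f (m + 1) α :=
      ⟨hc.1, fun j hj t ht => lt_of_lt_of_le (hc.2.1 j hj t ht) hglen, hc.2.2⟩
    have hE : Esum g α m = Esum f α m :=
      Finset.image_congr fun j hj =>
        hbsum (α j) (hc.2.1 j (Nat.lt_succ_of_lt (mem_range.mp (by simpa using hj))))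
    rw [hbsum (α m) (hc.2.1 m (Nat.lt_succ_self m)), hE]
    exact hf4 m α hm hc'

end


section
variable {S : Set ℝ} {p : Ultrafilter ℝ} {r : ℕ} {A : Fin r → Set (Finset ℝ)} {hr : 0 < r}
  {k : ℕ} {ε : ℝ}

theorem succ_mem (hSpos : ∀ x ∈ S, 0 < x) (hidem : p + p = p)
    (hzero : ∀ δ : ℝ, 0 < δ → {x | x ∈ S ∧ x < δ} ∈ p)
    {f : List ℝ} (hf : f ∈ Tset S p A hr k ε) :
    {s : ℝ | f ++ [s] ∈ Tset S p A hr k ε} ∈ p := by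
  classical
  obtain ⟨hf1, hf2, hf3, hf4⟩ := hf
  have hf' : f ∈ Tset S p A hr k ε := ⟨hf1, hf2, hf3, hf4⟩
  set n := f.length with hn
  set Sums : Finset ℝ := ((range n).powerset.filter fun β => β.Nonempty).image (bsum f)
    with hSums
  have hSumsMem : ∀ β : Finset ℕ, β.Nonempty → (∀ t ∈ β, t < n) → bsum f β ∈ Sums := by
    intro β h1 h2
    apply mem_image_of_mem
    rw [mem_filter, mem_powerset]
    exact ⟨fun t ht => mem_range.mpr (h2 t ht), h1⟩
  set 𝓔 : Set (Finset ℝ) := {E | ∃ m α, m < k ∧ Chn f m α ∧ E = Esum f α m} with h𝓔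
  set 𝓟 : Set (Finset ℝ × ℝ) :=
    {q | ∃ m α, m < k ∧ Chn f (m + 1) α ∧ q.1 = Esum f α m ∧ q.2 = bsum f (α m)} with h𝓟
  have hEsub : ∀ (mm : ℕ) (α : ℕ → Finset ℕ), Chn f mm α → Esum f α mm ∈ Sums.powerset := by
    intro mm α hc
    rw [mem_powerset]
    intro x hx
    obtain ⟨j, hj, rfl⟩ := mem_image.mp hx
    exact hSumsMem (α j) (hc.1 j (mem_range.mp hj)) (hc.2.1 j (mem_range.mp hj))
  have h𝓔fin : 𝓔.Finite := by
    apply Set.Finite.subset Sums.powerset.finite_toSet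
    rintro E ⟨m, α, hm, hc, rfl⟩
    exact hEsub m α hc
  have h𝓟fin : 𝓟.Finite := by
    apply Set.Finite.subset (Sums.powerset ×ˢ Sums).finite_toSet
    rintro ⟨E, t⟩ ⟨m, α, hm, hc, hE, ht⟩
    simp only [coe_product, Set.mem_prod, mem_coe]
    constructor
    · rw [show E = Esum f α m from hE]; exact hEsub m α (chn_mono (Nat.le_succ m) hc)
    · rw [show t = bsum f (α m) from ht]
      exact hSumsMem (α m) (hc.1 m (Nat.lt_succ_self m)) (hc.2.1 m (Nat.lt_succ_self m))
  -- the four p-large families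
  have hG1 : {s : ℝ | s ∈ S ∧ s < ε - total f} ∈ p := hzero _ (by linarith)
  have hG2 : (⋂ n' ∈ (↑(range n) : Set ℕ),
      {s : ℝ | s ∈ S ∧ s < f.getD n' 0 - ∑ t ∈ Ico (n' + 1) n, f.getD t 0}) ∈ p := by
    refine (Filter.biInter_mem (range n).finite_toSet).mpr ?_
    intro n' hn'
    have hn'' : n' < n := mem_range.mp (by simpa using hn')
    exact hzero _ (by have := hf3 n' hn''; linarith)
  have hG3 : (⋂ E ∈ 𝓔, st p (Bset p A hr k E)) ∈ p := by
    refine (Filter.biInter_mem h𝓔fin).mpr ?_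
    rintro E ⟨m, α, hm, hc, rfl⟩
    exact st_mem hidem (Bset_mem hSpos hidem hf' hm hc)
  have hG4 : (⋂ q ∈ 𝓟, {s : ℝ | q.2 + s ∈ st p (Bset p A hr k q.1)}) ∈ p := by
    refine (Filter.biInter_mem h𝓟fin).mpr ?_
    rintro ⟨E, t⟩ ⟨m, α, hm, hc, hE, ht⟩
    have hBE : Bset p A hr k (Esum f α m) ∈ p :=
      Bset_mem hSpos hidem hf' hm (chn_mono (Nat.le_succ m) hc)
    have hst : t ∈ st p (Bset p A hr k (Esum f α m)) := by
      rw [show t = bsum f (α m) from ht]; exact hf4 m α hm hc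
    rw [show E = Esum f α m from hE]
    exact st_trans hidem hBE hst
  apply Filter.mem_of_superset
    (Filter.inter_mem (Filter.inter_mem hG1 hG2) (Filter.inter_mem hG3 hG4))
  rintro s ⟨⟨⟨hsS, hsε⟩, hs2⟩, hs3, hs4⟩
  have hs2' : ∀ n', n' < n → s < f.getD n' 0 - ∑ t ∈ Ico (n' + 1) n, f.getD t 0 := by
    intro n' hn'
    have := Set.mem_iInter₂.mp hs2 n' (by simpa using mem_range.mpr hn')
    exact this.2
  have hs3' : ∀ E ∈ 𝓔, s ∈ st p (Bset p A hr k E) := fun E hE => Set.mem_iInter₂.mp hs3 E hE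
  have hs4' : ∀ q ∈ 𝓟, q.2 + s ∈ st p (Bset p A hr k q.1) :=
    fun q hq => Set.mem_iInter₂.mp hs4 q hq
  have hspos : 0 < s := hSpos s hsS
  -- facts about f ++ [s]
  have hlen' : (f ++ [s]).length = n + 1 := by simp [hn]
  have hD : ∀ t, t < n → (f ++ [s]).getD t 0 = f.getD t 0 := fun t ht => getD_app ht
  have hDn : (f ++ [s]).getD n 0 = s := getD_app_len f s
  have hbsum' : ∀ β : Finset ℕ, (∀ t ∈ β, t < n) → bsum (f ++ [s]) β = bsum f β :=
    fun β hβ => Finset.sum_congr rfl fun t ht => hD t (hβ t ht)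
  have htotal' : total (f ++ [s]) = total f + s := by
    rw [total, hlen', Finset.sum_range_succ, hDn]
    congr 1
    exact Finset.sum_congr rfl fun t ht => hD t (mem_range.mp ht)
  refine ⟨?_, ?_, ?_, ?_⟩
  · intro x hx
    rcases List.mem_append.mp hx with h | h
    · exact hf1 x h
    · rw [List.mem_singleton.mp h]; exact hsS
  · rw [htotal']; linarith
  · intro n' hn'
    rw [hlen'] at hn'
    rcases Nat.lt_succ_iff_lt_or_eq.mp hn' with h | rfl
    · have hstep : (∑ t ∈ Ico (n' + 1) ((f ++ [s]).length), (f ++ [s]).getD t 0)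
          = (∑ t ∈ Ico (n' + 1) n, f.getD t 0) + s := by
        rw [hlen', Finset.sum_Ico_succ_top (by omega), hDn]
        congr 1
        exact Finset.sum_congr rfl fun t ht => hD t (mem_Ico.mp ht).2
      rw [hstep, hD n' h]
      have := hs2' n' h
      linarith
    · rw [hlen']
      simp only [Ico_self, Finset.sum_empty]
      rw [hDn]
      exact hspos
  · intro m α hm hc
    have hidx : ∀ j, j < m + 1 → ∀ t ∈ α j, t < n + 1 := by
      intro j hj t ht
      have := hc.2.1 j hj t ht
      rwa [hlen'] at this
    have hlow : ∀ j, j < m → ∀ t ∈ α j, t < n := by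
      intro j hj t ht
      obtain ⟨u, hu⟩ := hc.1 m (Nat.lt_succ_self m)
      have h1 : t < u := hc.2.2 j m hj (Nat.lt_succ_self m) t ht u hu
      have h2 : u < n + 1 := hidx m (Nat.lt_succ_self m) u hu
      omega
    have hEeq : Esum (f ++ [s]) α m = Esum f α m :=
      Finset.image_congr fun j hj => hbsum' (α j) (hlow j (mem_range.mp (by simpa using hj)))
    by_cases hnin : n ∈ α m
    · -- the new index participates in the last block
      set γ := (α m).erase n with hγ
      have hγsub : ∀ t ∈ γ, t < n := by
        intro t ht
        have h1 := hidx m (Nat.lt_succ_self m) t (mem_of_mem_erase ht)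
        have h2 : t ≠ n := ne_of_mem_erase ht
        omega
      have hαm : α m = insert n γ := (insert_erase hnin).symm
      have hbαm : bsum (f ++ [s]) (α m) = s + bsum f γ := by
        rw [hαm, bsum, Finset.sum_insert (notMem_erase n _), hDn]
        congr 1
        exact Finset.sum_congr rfl fun t ht => hD t (hγsub t ht)
      rcases γ.eq_empty_or_nonempty with hγe | hγne
      · -- the last block is exactly {n}: start a new block
        have hcE : Chn f m α :=
          ⟨fun j hj => hc.1 j (Nat.lt_succ_of_lt hj), hlow,
           fun j₁ j₂ h12 h2 => hc.2.2 j₁ j₂ h12 (Nat.lt_succ_of_lt h2)⟩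
        have hEmem : Esum f α m ∈ 𝓔 := ⟨m, α, hm, hcE, rfl⟩
        have := hs3' _ hEmem
        rw [hbαm, hγe, hEeq]
        simpa [bsum] using this
      · -- the last block extends an old block γ
        set α' : ℕ → Finset ℕ := fun j => if j = m then γ else α j with hα'
        have hα'low : ∀ j, j < m → α' j = α j := by
          intro j hj; simp [hα', Nat.ne_of_lt hj]
        have hc'' : Chn f (m + 1) α' := by
          refine ⟨?_, ?_, ?_⟩
          · intro j hj
            rcases Nat.lt_succ_iff_lt_or_eq.mp hj with h | rfl
            · rw [hα'low j h]; exact hc.1 j (Nat.lt_succ_of_lt h)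
            · simpa [hα'] using hγne
          · intro j hj t ht
            rcases Nat.lt_succ_iff_lt_or_eq.mp hj with h | rfl
            · rw [hα'low j h] at ht; exact hlow j h t ht
            · simp only [hα', if_pos rfl] at ht; exact hγsub t ht
          · intro j₁ j₂ h12 h2 u hu v hv
            have hu' : u ∈ α j₁ := by
              by_cases hne : j₁ = m
              · subst hne
                simp only [hα', if_pos rfl] at hu
                rw [hγ] at hu
                exact mem_of_mem_erase hu
              · simpa only [hα', if_neg hne] using hu
            have hv' : v ∈ α j₂ := by
              by_cases hne : j₂ = m
              · subst hne
                simp only [hα', if_pos rfl] at hv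
                rw [hγ] at hv
                exact mem_of_mem_erase hv
              · simpa only [hα', if_neg hne] using hv
            exact hc.2.2 j₁ j₂ h12 h2 u hu' v hv'
        have hEα' : Esum f α' m = Esum f α m :=
          Finset.image_congr fun j hj => by
            rw [hα'low j (mem_range.mp (by simpa using hj))]
        have hq : ((Esum f α m, bsum f γ) : Finset ℝ × ℝ) ∈ 𝓟 :=
          ⟨m, α', hm, hc'', by simp [hEα'], by simp [hα']⟩
        have := hs4' _ hq
        rw [hbαm, hEeq, add_comm]
        exact this
    · -- the new index does not occur at all
      have hαm : ∀ t ∈ α m, t < n := by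
        intro t ht
        have h1 := hidx m (Nat.lt_succ_self m) t ht
        have h2 : t ≠ n := fun h => hnin (h ▸ ht)
        omega
      have hc' : Chn f (m + 1) α := by
        refine ⟨hc.1, ?_, hc.2.2⟩
        intro j hj t ht
        rcases Nat.lt_succ_iff_lt_or_eq.mp hj with h | rfl
        · exact hlow j h t ht
        · exact hαm t ht
      rw [hbsum' (α m) hαm, hEeq]
      exact hf4 m α hm hc'

end

end MTL


open Finset in
/-- The tree lemma: for `S` a dense subsemigroup of `((0,∞),+)`, `p` an idempotent
ultrafilter in `0⁺` (concentrated on `S`), `ε > 0` and a partition of the `k`-element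
subsets of `S ∩ (0,ε)` into `r` cells, there are a color `i` and a tree
`T ⊆ (S ∩ (0,ε))^{<ω}` (finite sequences, modelled as lists) such that for every `f ∈ T`
the successor set `T(f) = {s : f⌢s ∈ T}` is `p`-large, and for all finite nonempty
`α₁ < ⋯ < α_k ⊆ dom f` the set `{∑_{t∈α₁} f(t), …, ∑_{t∈α_k} f(t)}` lies in `A_i`. -/
theorem multidim_tree_lemma_near_zero (S : Set ℝ)
    (hSpos : ∀ x ∈ S, 0 < x)
    (hSadd : ∀ x ∈ S, ∀ y ∈ S, x + y ∈ S)
    (hSdense : ∀ a b : ℝ, 0 ≤ a → a < b → ∃ s ∈ S, s ∈ Set.Ioo a b)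
    (p : Ultrafilter ℝ) (hidem : p + p = p)
    (hzero : ∀ δ : ℝ, 0 < δ → {x | x ∈ S ∧ x < δ} ∈ p)
    (ε : ℝ) (hε : 0 < ε) (k r : ℕ) (hk : 1 ≤ k) (hr : 1 ≤ r)
    (A : Fin r → Set (Finset ℝ))
    (hcover : ∀ E : Finset ℝ, E.card = k → (∀ x ∈ E, x ∈ S ∧ x < ε) → ∃ i, E ∈ A i) :
    ∃ i : Fin r, ∃ T : Set (List ℝ),
      T.Nonempty ∧
      (∀ f ∈ T, ∀ x ∈ f, x ∈ S ∧ x < ε) ∧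
      (∀ f ∈ T, ∀ n : ℕ, f.take n ∈ T) ∧
      (∀ f ∈ T, {s : ℝ | f ++ [s] ∈ T} ∈ p) ∧
      (∀ f ∈ T, ∀ α : Fin k → Finset ℕ,
        (∀ j, (α j).Nonempty) →
        (∀ j, ∀ t ∈ α j, t < f.length) →
        (∀ j₁ j₂ : Fin k, j₁ < j₂ → ∀ s ∈ α j₁, ∀ t ∈ α j₂, s < t) →
        Finset.image (fun j => ∑ t ∈ α j, f.getD t 0) Finset.univ ∈ A i) := by
  classical
  have hr0 : 0 < r := hr
  refine ⟨MTL.col p A hr0 k ∅, MTL.Tset S p A hr0 k ε, ⟨[], MTL.nil_mem hε⟩, ?_, ?_, ?_, ?_⟩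
  · intro f hf x hx
    refine ⟨hf.1 x hx, ?_⟩
    obtain ⟨t, ht, rfl⟩ := List.mem_iff_getElem.mp hx
    have heq : f[t] = f.getD t 0 := (List.getD_eq_getElem f 0 ht).symm
    rw [heq]
    have hle : f.getD t 0 ≤ MTL.total f := by
      apply Finset.single_le_sum (f := fun u => f.getD u 0) _ (Finset.mem_range.mpr ht)
      intro u hu
      exact le_of_lt (MTL.entry_pos hSpos hf.1 (Finset.mem_range.mp hu))
    exact lt_of_le_of_lt hle hf.2.1
  · intro f hf n
    exact MTL.take_mem hSpos hf n
  · intro f hf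
    exact MTL.succ_mem hSpos hidem hzero hf
  · intro f hf α hne hlt hord
    set ᾱ : ℕ → Finset ℕ := fun j => if h : j < k then α ⟨j, h⟩ else ∅ with hᾱ
    have hᾱeq : ∀ j (hj : j < k), ᾱ j = α ⟨j, hj⟩ := by
      intro j hj; simp only [hᾱ, dif_pos hj]
    have hc : MTL.Chn f k ᾱ := by
      refine ⟨?_, ?_, ?_⟩
      · intro j hj; rw [hᾱeq j hj]; exact hne ⟨j, hj⟩
      · intro j hj t ht; rw [hᾱeq j hj] at ht; exact hlt ⟨j, hj⟩ t ht
      · intro j₁ j₂ h12 h2 u hu v hv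
        have h1 : j₁ < k := h12.trans h2
        rw [hᾱeq j₁ h1] at hu
        rw [hᾱeq j₂ h2] at hv
        exact hord ⟨j₁, h1⟩ ⟨j₂, h2⟩ h12 u hu v hv
    have hcol := MTL.chain_color hSpos hf (le_refl k) hc
    have hEeq : MTL.Esum f ᾱ k
        = Finset.image (fun j => ∑ t ∈ α j, f.getD t 0) Finset.univ := by
      ext x
      simp only [MTL.Esum, Finset.mem_image, Finset.mem_range, Finset.mem_univ, true_and]
      constructor
      · rintro ⟨j, hj, rfl⟩
        exact ⟨⟨j, hj⟩, by rw [MTL.bsum, hᾱeq j hj]⟩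
      · rintro ⟨j, rfl⟩
        exact ⟨j.1, j.2, by rw [MTL.bsum, hᾱeq j.1 j.2]⟩
    have hcard : (MTL.Esum f ᾱ k).card = k := MTL.Esum_card hSpos hf.1 hf.2.2.1 hc
    have hval : ∀ x ∈ MTL.Esum f ᾱ k, x ∈ S ∧ x < ε := by
      intro x hx
      obtain ⟨j, hj, rfl⟩ := Finset.mem_image.mp hx
      have hj' := Finset.mem_range.mp hj
      refine ⟨MTL.bsum_mem_S hSadd hf.1 (hc.1 j hj') (hc.2.1 j hj'), ?_⟩
      exact lt_of_le_of_lt (MTL.bsum_le_total hSpos hf.1 (hc.2.1 j hj')) hf.2.1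
    have hex : ∃ i, MTL.Esum f ᾱ k ∈ A i := hcover _ hcard hval
    have hmem := MTL.col_zero (p := p) (hr := hr0) hex
    rw [Nat.sub_self] at hcol
    rw [hcol] at hmem
    rw [← hEeq]
    exact hmem
end

section
/- Let (S,+) be a dense subsemigroup of ((0,∞),+), let A ⊆ S be central near 0 (i.e., A belongs to some minimal idempotent of the semigroup 0⁺ ⊆ βS_d), and let ⟨⟨y_{i,t}⟩_{t=1}^∞⟩_{i=1}^∞ be a sequence of sequences in S such that for each i, Σ_{t∈H} y_{i,t} can be made arbitrarily small by choosing H appropriately (as in Hindman–Leader's class 𝒴). Then there exist a sequence ⟨a_n⟩_{n=1}^∞ in S and a sequence ⟨H_n⟩_{n=1}^∞ of finite nonempty subsets of ℕ such that: (a) for all n, a_n < 1/n and max H_n < min H_{n+1}; and (b) for every function f : ℕ → ℕ with f(n) ≤ n for all n, all finite sums FS(⟨a_n + Σ_{t∈H_n} y_{f(n),t}⟩_{n=1}^∞) are contained in A. -/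
attribute [local instance] Ultrafilter.add

/-- `I` is a two-sided ideal of the subsemigroup `0⁺`. -/
def IsIdealOfZeroPlus (S : Set ℝ) (I : Set (Ultrafilter ℝ)) : Prop :=
  I.Nonempty ∧ I ⊆ zeroPlusAdd S ∧
    ∀ q ∈ zeroPlusAdd S, ∀ x ∈ I, q + x ∈ I ∧ x + q ∈ I

/-- `p` is a minimal idempotent of `0⁺`: an idempotent lying in the smallest two-sided
ideal `K(0⁺)`, i.e. in every two-sided ideal of `0⁺`. -/
def IsMinimalIdempotentNearZero (S : Set ℝ) (p : Ultrafilter ℝ) : Prop :=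
  p ∈ zeroPlusAdd S ∧ p + p = p ∧ ∀ I, IsIdealOfZeroPlus S I → p ∈ I


attribute [local instance] Ultrafilter.addSemigroup

open Filter Set



open Filter Set

section Abstract

variable {M : Type} [AddSemigroup M] [TopologicalSpace M] [T2Space M] [CompactSpace M]

/-- `L` is a left ideal of the subsemigroup `E`. -/
def IsLI (E L : Set M) : Prop :=
  L.Nonempty ∧ L ⊆ E ∧ ∀ x ∈ E, ∀ z ∈ L, x + z ∈ L

lemma exists_minLI (hc : ∀ v : M, Continuous (· + v))
    (E : Set M) (hEc : IsCompact E) (hEs : ∀ x ∈ E, ∀ y ∈ E, x + y ∈ E)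
    (L₀ : Set M) (hL₀ : IsLI E L₀) (hL₀c : IsCompact L₀) :
    ∃ L, L ⊆ L₀ ∧ IsCompact L ∧ IsLI E L ∧
      ∀ L', IsLI E L' → L' ⊆ L → L' = L := by
  classical
  set 𝒮 : Set (Set M) := {L | L ⊆ L₀ ∧ IsClosed L ∧ IsLI E L} with h𝒮
  have himg : ∀ u ∈ E, IsLI E ((· + u) '' E) ∧ IsClosed ((· + u) '' E) := by
    intro u hu
    refine ⟨⟨⟨u + u, ⟨u, hu, rfl⟩⟩, ?_, ?_⟩, (hEc.image (hc u)).isClosed⟩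
    · rintro _ ⟨x, hx, rfl⟩; exact hEs x hx u hu
    · rintro z hz _ ⟨x, hx, rfl⟩
      exact ⟨z + x, hEs z hz x hx, by exact add_assoc z x u⟩
  have hchain : ∀ c ⊆ 𝒮, IsChain (· ⊆ ·) c → c.Nonempty → ∃ lb ∈ 𝒮, ∀ s ∈ c, lb ⊆ s := by
    intro c hc𝒮 hch hcne
    obtain ⟨c₀, hc₀⟩ := hcne
    have hnecap : (⋂₀ c).Nonempty := by
      haveI : Nonempty c := Set.Nonempty.to_subtype ⟨c₀, hc₀⟩
      apply IsCompact.nonempty_sInter_of_directed_nonempty_isCompact_isClosed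
      · intro x hx y hy
        by_cases hxy : x = y
        · exact ⟨x, hx, subset_rfl, hxy ▸ subset_rfl⟩
        · rcases hch hx hy hxy with h | h
          · exact ⟨x, hx, subset_rfl, h⟩
          · exact ⟨y, hy, h, subset_rfl⟩
      · exact fun U hU => (hc𝒮 hU).2.2.1
      · exact fun U hU => (hc𝒮 hU).2.1.isCompact
      · exact fun U hU => (hc𝒮 hU).2.1
    refine ⟨⋂₀ c, ⟨?_, ?_, hnecap, ?_, ?_⟩, fun s hs => Set.sInter_subset_of_mem hs⟩
    · exact (Set.sInter_subset_of_mem hc₀).trans (hc𝒮 hc₀).1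
    · exact isClosed_sInter fun U hU => (hc𝒮 hU).2.1
    · exact (Set.sInter_subset_of_mem hc₀).trans (hc𝒮 hc₀).2.2.2.1
    · intro x hx z hz
      rw [Set.mem_sInter] at hz ⊢
      intro U hU
      exact (hc𝒮 hU).2.2.2.2 x hx z (hz U hU)
  obtain ⟨L, hLL₀, hLmin⟩ :=
    zorn_superset_nonempty 𝒮 hchain L₀ ⟨subset_rfl, hL₀c.isClosed, hL₀⟩
  obtain ⟨hL0, hLcl, hLI⟩ := hLmin.prop
  refine ⟨L, hLL₀, hLcl.isCompact, hLI, ?_⟩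
  intro L' hL' hL'L
  obtain ⟨u, hu⟩ := hL'.1
  have huE : u ∈ E := hL'.2.1 hu
  have hEu𝒮 : ((· + u) '' E) ∈ 𝒮 := by
    refine ⟨?_, (himg u huE).2, (himg u huE).1⟩
    rintro _ ⟨x, hx, rfl⟩
    exact hL₀.2.2 x hx u (hLL₀ (hL'L hu))
  have h1 : ((· + u) '' E) ⊆ L' := by
    rintro _ ⟨x, hx, rfl⟩; exact hL'.2.2 x hx u hu
  have h2 := hLmin.2 hEu𝒮 (h1.trans hL'L)
  exact le_antisymm hL'L (h2.trans h1)

lemma minIdem_mem_ideal (hc : ∀ v : M, Continuous (· + v))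
    (Y L E I : Set M) (p : M)
    (hYs : ∀ x ∈ Y, ∀ z ∈ Y, x + z ∈ Y)
    (hL : IsLI Y L) (hLmin : ∀ L', IsLI Y L' → L' ⊆ L → L' = L)
    (hpL : p ∈ L) (hpE : p ∈ E) (hpp : p + p = p)
    (hEY : E ⊆ Y) (hEc : IsCompact E) (hEs : ∀ x ∈ E, ∀ z ∈ E, x + z ∈ E)
    (hIne : I.Nonempty) (hIE : I ⊆ E)
    (hAbsorb : ∀ x ∈ E, ∀ z ∈ I, x + z ∈ I ∧ z + x ∈ I) :
    p ∈ I := by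
  classical
  -- L₀ := E + p is a compact left ideal of E
  have hL₀ : IsLI E ((· + p) '' E) := by
    refine ⟨⟨p + p, ⟨p, hpE, rfl⟩⟩, ?_, ?_⟩
    · rintro _ ⟨x, hx, rfl⟩; exact hEs x hx p hpE
    · rintro z hz _ ⟨x, hx, rfl⟩
      exact ⟨z + x, hEs z hz x hx, by exact add_assoc z x p⟩
  obtain ⟨LE, hLEL₀, hLEc, hLEI, hLEmin⟩ :=
    exists_minLI hc E hEc hEs ((· + p) '' E) hL₀ (hEc.image (hc p))
  have hLEE : LE ⊆ E := hLEI.2.1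
  obtain ⟨e, heLE, he⟩ :=
    exists_idempotent_in_compact_add_subsemigroup hc LE hLEI.1 hLEc
      (fun x hx z hz => hLEI.2.2 x (hLEE hx) z hz)
  have hep : e + p = e := by
    obtain ⟨f, _, rfl⟩ := hLEL₀ heLE
    rw [add_assoc, hpp]
  set p' := p + e with hp'
  have hp'LE : p' ∈ LE := hLEI.2.2 p hpE e heLE
  have hp'idem : p' + p' = p' := by
    rw [hp', add_assoc, ← add_assoc e p e, hep, he]
  have hpp' : p + p' = p' := by rw [hp', ← add_assoc, hpp]
  have hp'p : p' + p = p' := by rw [hp', add_assoc, hep]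
  have hL₀L : ((· + p) '' E) ⊆ L := by
    rintro _ ⟨x, hx, rfl⟩; exact hL.2.2 x (hEY hx) p hpL
  have hp'L : p' ∈ L := hL₀L (hLEL₀ hp'LE)
  have hYp' : IsLI Y ((· + p') '' Y) := by
    refine ⟨⟨p + p', ⟨p, hEY hpE, rfl⟩⟩, ?_, ?_⟩
    · rintro _ ⟨x, hx, rfl⟩; exact hYs x hx p' (hL.2.1 hp'L)
    · rintro z hz _ ⟨x, hx, rfl⟩
      exact ⟨z + x, hYs z hz x hx, by exact add_assoc z x p'⟩
  have hYp'L : ((· + p') '' Y) ⊆ L := by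
    rintro _ ⟨x, hx, rfl⟩; exact hL.2.2 x hx p' hp'L
  have hYeq : ((· + p') '' Y) = L := hLmin _ hYp' hYp'L
  have hpmem : p ∈ ((· + p') '' Y) := hYeq ▸ hpL
  obtain ⟨w, _, hw0⟩ := hpmem
  have hw : w + p' = p := hw0
  have hpeqp' : p' = p := by
    have h1 : p + p' = p := by
      calc p + p' = (w + p') + p' := by rw [hw]
        _ = w + (p' + p') := by rw [add_assoc]
        _ = w + p' := by rw [hp'idem]
        _ = p := hw
    rw [← hpp', h1]
  have hpLE : p ∈ LE := hpeqp' ▸ hp'LE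
  -- now LE ⊆ I
  obtain ⟨z₀, hz₀⟩ := hIne
  have huI : z₀ + p ∈ I := (hAbsorb p hpE z₀ hz₀).2
  have huLE : z₀ + p ∈ LE := hLEI.2.2 z₀ (hIE hz₀) p hpLE
  have hEuLI : IsLI E ((· + (z₀ + p)) '' E) := by
    refine ⟨⟨(z₀ + p) + (z₀ + p), ⟨z₀ + p, hLEE huLE, rfl⟩⟩, ?_, ?_⟩
    · rintro _ ⟨x, hx, rfl⟩; exact hEs x hx _ (hLEE huLE)
    · rintro z hz _ ⟨x, hx, rfl⟩
      exact ⟨z + x, hEs z hz x hx, by exact add_assoc z x _⟩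
  have hEuLE : ((· + (z₀ + p)) '' E) ⊆ LE := by
    rintro _ ⟨x, hx, rfl⟩; exact hLEI.2.2 x hx _ huLE
  have heq := hLEmin _ hEuLI hEuLE
  have : p ∈ ((· + (z₀ + p)) '' E) := heq ▸ hpLE
  obtain ⟨x, hx, hxe0⟩ := this
  have hxe : x + (z₀ + p) = p := hxe0
  have := (hAbsorb x hx _ huI).1
  rwa [hxe] at this

end Abstract

section ZeroPlus

lemma zeroPlus_closed (S : Set ℝ) : IsClosed (zeroPlusAdd S) := by
  have h : zeroPlusAdd S =
      ⋂ (ε : ℝ), ⋂ (_ : 0 < ε), {u : Ultrafilter ℝ | {x | x ∈ S ∧ x < ε} ∈ u} := by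
    ext u
    simp only [Set.mem_iInter]
    rfl
  rw [h]
  exact isClosed_iInter fun ε => isClosed_iInter fun _ => ultrafilter_isClosed_basic _

lemma mem_add_ultra {u v : Ultrafilter ℝ} {A : Set ℝ} :
    A ∈ u + v ↔ {r : ℝ | {s : ℝ | r + s ∈ A} ∈ v} ∈ u := Iff.rfl

lemma zeroPlus_add_mem {S : Set ℝ} (hSadd : ∀ x ∈ S, ∀ y ∈ S, x + y ∈ S) :
    ∀ u ∈ zeroPlusAdd S, ∀ v ∈ zeroPlusAdd S, u + v ∈ zeroPlusAdd S := by
  intro u hu v hv ε hε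
  rw [mem_add_ultra]
  have h2 : (0:ℝ) < ε / 2 := by linarith
  refine Filter.mem_of_superset (hu (ε/2) h2) ?_
  intro r hr
  refine Filter.mem_of_superset (hv (ε/2) h2) ?_
  intro s hs
  exact ⟨hSadd r hr.1 s hs.1, by linarith [hr.2, hs.2]⟩

lemma exists_minLI_containing (S : Set ℝ)
    (hSadd : ∀ x ∈ S, ∀ y ∈ S, x + y ∈ S) (p : Ultrafilter ℝ)
    (hpZ : p ∈ zeroPlusAdd S)
    (hpmin : ∀ I, IsIdealOfZeroPlus S I → p ∈ I) :
    ∃ L : Set (Ultrafilter ℝ), IsLI (zeroPlusAdd S) L ∧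
      (∀ L', IsLI (zeroPlusAdd S) L' → L' ⊆ L → L' = L) ∧ p ∈ L := by
  classical
  set Z := zeroPlusAdd S with hZ
  have hZc : IsCompact Z := (zeroPlus_closed S).isCompact
  have hZs : ∀ u ∈ Z, ∀ v ∈ Z, u + v ∈ Z := zeroPlus_add_mem hSadd
  set K : Set (Ultrafilter ℝ) :=
    {x | ∃ L, IsLI Z L ∧ (∀ L', IsLI Z L' → L' ⊆ L → L' = L) ∧ x ∈ L} with hK
  have hKideal : IsIdealOfZeroPlus S K := by
    refine ⟨?_, ?_, ?_⟩
    · obtain ⟨L, _, _, hLI, hLmin⟩ :=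
        exists_minLI (fun v => Ultrafilter.continuous_add_left v) Z hZc hZs Z
          ⟨⟨p, hpZ⟩, subset_rfl, hZs⟩ hZc
      obtain ⟨x, hx⟩ := hLI.1
      exact ⟨x, L, hLI, hLmin, hx⟩
    · rintro x ⟨L, hLI, _, hx⟩; exact hLI.2.1 hx
    · rintro q hq x ⟨L, hLI, hLmin, hx⟩
      constructor
      · exact ⟨L, hLI, hLmin, hLI.2.2 q hq x hx⟩
      · refine ⟨(· + q) '' L, ?_, ?_, ⟨x, hx, rfl⟩⟩
        · refine ⟨⟨x + q, x, hx, rfl⟩, ?_, ?_⟩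
          · rintro _ ⟨w, hw, rfl⟩; exact hZs w (hLI.2.1 hw) q hq
          · rintro z hz _ ⟨w, hw, rfl⟩
            exact ⟨z + w, hLI.2.2 z hz w hw, by exact add_assoc z w q⟩
        · intro J hJ hJsub
          have hL' : {w | w ∈ L ∧ w + q ∈ J} = L := by
            apply hLmin
            · refine ⟨?_, fun w hw => hLI.2.1 hw.1, ?_⟩
              · obtain ⟨j, hj⟩ := hJ.1
                obtain ⟨w, hw, rfl⟩ := hJsub hj
                exact ⟨w, hw, hj⟩
              · intro z hz w hw
                refine ⟨hLI.2.2 z hz w hw.1, ?_⟩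
                have : z + (w + q) ∈ J := hJ.2.2 z hz _ hw.2
                rwa [← add_assoc] at this
            · exact fun w hw => hw.1
          apply Set.Subset.antisymm hJsub
          rintro _ ⟨w, hw, rfl⟩
          rw [← hL'] at hw
          exact hw.2
  obtain ⟨L, hLI, hLmin, hpL⟩ := hpmin K hKideal
  exact ⟨L, hLI, hLmin, hpL⟩

end ZeroPlus

section Product

abbrev PU (ℓ : ℕ) := Fin (ℓ + 1) → Ultrafilter ℝ

lemma PU_cont (ℓ : ℕ) : ∀ v : PU ℓ, Continuous (· + v) := fun v =>
  continuous_pi fun i => (Ultrafilter.continuous_add_left (v i)).comp (continuous_apply i)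

lemma memClosure_PU_iff {ℓ : ℕ} {D : Set (PU ℓ)} {z : PU ℓ} :
    z ∈ closure D ↔
      ∀ A : Fin (ℓ + 1) → Set ℝ, (∀ i, A i ∈ z i) → ∃ w ∈ D, ∀ i, A i ∈ w i := by
  constructor
  · intro hz A hA
    have hopen : IsOpen {w : PU ℓ | ∀ i, A i ∈ w i} := by
      have h : {w : PU ℓ | ∀ i, A i ∈ w i} =
          ⋂ i, (fun w : PU ℓ => w i) ⁻¹' {u | A i ∈ u} := by
        ext w; simp only [Set.mem_setOf_eq, Set.mem_iInter, Set.mem_preimage]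
      rw [h]
      exact isOpen_iInter_of_finite fun i =>
        (ultrafilter_isOpen_basic (A i)).preimage (continuous_apply i)
    obtain ⟨w, hw1, hw2⟩ := mem_closure_iff.mp hz _ hopen hA
    exact ⟨w, hw2, hw1⟩
  · intro h
    rw [mem_closure_iff]
    intro o ho hzo
    obtain ⟨I, u, hu, hsub⟩ := isOpen_pi_iff.mp ho z hzo
    have hexists : ∀ i : Fin (ℓ + 1),
        ∃ s : Set ℝ, s ∈ z i ∧ (i ∈ I → {u' : Ultrafilter ℝ | s ∈ u'} ⊆ u i) := by
      intro i
      by_cases hi : i ∈ I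
      · obtain ⟨v, hv, hzv, hvu⟩ :=
          ultrafilterBasis_is_basis.exists_subset_of_mem_open (hu i hi).2 (hu i hi).1
        obtain ⟨s, rfl⟩ := hv
        exact ⟨s, hzv, fun _ => hvu⟩
      · exact ⟨Set.univ, Filter.univ_mem, fun h' => absurd h' hi⟩
    choose A hA1 hA2 using hexists
    obtain ⟨w, hwD, hw⟩ := h A hA1
    exact ⟨w, hsub fun i hi => hA2 i hi (hw i), hwD⟩

def tupP (y : ℕ → ℕ → ℝ) (ℓ : ℕ) (a : ℝ) (H : Finset ℕ) : PU ℓ :=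
  fun i => pure (a + ∑ t ∈ H, y (i : ℕ) t)

def WSet (S : Set ℝ) (y : ℕ → ℕ → ℝ) (ℓ : ℕ) (ne : Prop) (m : ℕ) (δ : ℝ) : Set (PU ℓ) :=
  {x | ∃ a H, a ∈ S ∧ a < δ ∧ (ne → H.Nonempty) ∧ (∀ t ∈ H, m ≤ t) ∧
    (∀ i : Fin (ℓ + 1), ∑ t ∈ H, y (i : ℕ) t < δ) ∧ x = tupP y ℓ a H}

def EISet (S : Set ℝ) (y : ℕ → ℕ → ℝ) (ℓ : ℕ) (ne : Prop) : Set (PU ℓ) :=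
  ⋂ (m : ℕ), ⋂ (δ : ℝ), ⋂ (_ : 0 < δ), closure (WSet S y ℓ ne m δ)

lemma mem_EISet_iff {S : Set ℝ} {y : ℕ → ℕ → ℝ} {ℓ : ℕ} {ne : Prop} {x : PU ℓ} :
    x ∈ EISet S y ℓ ne ↔
      ∀ (m : ℕ) (δ : ℝ), 0 < δ → ∀ A : Fin (ℓ + 1) → Set ℝ, (∀ i, A i ∈ x i) →
        ∃ a H, a ∈ S ∧ a < δ ∧ (ne → H.Nonempty) ∧ (∀ t ∈ H, m ≤ t) ∧
          (∀ i : Fin (ℓ + 1), ∑ t ∈ H, y (i : ℕ) t < δ) ∧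
          ∀ i : Fin (ℓ + 1), (a + ∑ t ∈ H, y (i : ℕ) t) ∈ A i := by
  constructor
  · intro hx m δ hδ A hA
    have hx' : x ∈ closure (WSet S y ℓ ne m δ) :=
      Set.mem_iInter.mp (Set.mem_iInter.mp (Set.mem_iInter.mp hx m) δ) hδ
    obtain ⟨w, ⟨a, H, h1, h2, h3, h4, h5, rfl⟩, hw⟩ := memClosure_PU_iff.mp hx' A hA
    refine ⟨a, H, h1, h2, h3, h4, h5, fun i => ?_⟩
    have := hw i
    rwa [tupP, Ultrafilter.mem_pure] at this
  · intro h
    refine Set.mem_iInter.mpr fun m => Set.mem_iInter.mpr fun δ => Set.mem_iInter.mpr fun hδ => ?_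
    rw [memClosure_PU_iff]
    intro A hA
    obtain ⟨a, H, h1, h2, h3, h4, h5, h6⟩ := h m δ hδ A hA
    refine ⟨tupP y ℓ a H, ⟨a, H, h1, h2, h3, h4, h5, rfl⟩, fun i => ?_⟩
    rw [tupP, Ultrafilter.mem_pure]
    exact h6 i

lemma EISet_mono {S : Set ℝ} {y : ℕ → ℕ → ℝ} {ℓ : ℕ} {ne ne' : Prop} (h : ne' → ne) :
    EISet S y ℓ ne ⊆ EISet S y ℓ ne' := by
  intro x hx
  rw [mem_EISet_iff] at hx ⊢
  intro m δ hδ A hA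
  obtain ⟨a, H, h1, h2, h3, h4, h5, h6⟩ := hx m δ hδ A hA
  exact ⟨a, H, h1, h2, fun hn => h3 (h hn), h4, h5, h6⟩

lemma add_mem_EISet {S : Set ℝ} {y : ℕ → ℕ → ℝ} {ℓ : ℕ} {ne₁ ne₂ : Prop}
    (hSadd : ∀ x ∈ S, ∀ z ∈ S, x + z ∈ S)
    {x x' : PU ℓ} (hx : x ∈ EISet S y ℓ ne₁) (hx' : x' ∈ EISet S y ℓ ne₂) :
    x + x' ∈ EISet S y ℓ (ne₁ ∨ ne₂) := by
  rw [mem_EISet_iff] at hx hx' ⊢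
  intro m δ hδ A hA
  have hδ2 : (0:ℝ) < δ / 2 := by linarith
  have hA' : ∀ i, {r : ℝ | {s : ℝ | r + s ∈ A i} ∈ x' i} ∈ x i := fun i =>
    (mem_add_ultra).mp (hA i)
  obtain ⟨a, H, ha, haδ, hne1, hmin, hsum, hmem⟩ := hx m (δ/2) hδ2 _ hA'
  have hA'' : ∀ i, {s : ℝ | (a + ∑ t ∈ H, y (i : ℕ) t) + s ∈ A i} ∈ x' i := fun i => hmem i
  obtain ⟨a', H', ha', haδ', hne2, hmin', hsum', hmem'⟩ :=
    hx' (max m (H.sup id + 1)) (δ/2) hδ2 _ hA''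
  have hdisj : Disjoint H H' := by
    rw [Finset.disjoint_left]
    intro t ht ht'
    have h1 : t ≤ H.sup id := Finset.le_sup (f := id) ht
    have h2 : max m (H.sup id + 1) ≤ t := hmin' t ht'
    have h3 : H.sup id + 1 ≤ t := le_trans (le_max_right _ _) h2
    omega
  refine ⟨a + a', H ∪ H', hSadd a ha a' ha', by linarith, ?_, ?_, ?_, ?_⟩
  · rintro (h | h)
    · obtain ⟨t, ht⟩ := hne1 h; exact ⟨t, Finset.mem_union_left _ ht⟩
    · obtain ⟨t, ht⟩ := hne2 h; exact ⟨t, Finset.mem_union_right _ ht⟩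
  · intro t ht
    rcases Finset.mem_union.mp ht with h | h
    · exact hmin t h
    · exact le_trans (le_max_left _ _) (hmin' t h)
  · intro i
    rw [Finset.sum_union hdisj]
    linarith [hsum i, hsum' i]
  · intro i
    rw [Finset.sum_union hdisj]
    have hval : (a + ∑ t ∈ H, y (i : ℕ) t) + (a' + ∑ t ∈ H', y (i : ℕ) t) ∈ A i := hmem' i
    have heq : (a + a') + ((∑ t ∈ H, y (i : ℕ) t) + (∑ t ∈ H', y (i : ℕ) t)) =
        (a + ∑ t ∈ H, y (i : ℕ) t) + (a' + ∑ t ∈ H', y (i : ℕ) t) := by ring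
    rw [heq]
    exact hval

lemma diag_mem_EISet {S : Set ℝ} {y : ℕ → ℕ → ℝ} {ℓ : ℕ}
    {r : Ultrafilter ℝ} (hr : r ∈ zeroPlusAdd S) :
    (fun _ : Fin (ℓ + 1) => r) ∈ EISet S y ℓ False := by
  classical
  rw [mem_EISet_iff]
  intro m δ hδ A hA
  have hmem : ((⋂ i, A i) ∩ {x | x ∈ S ∧ x < δ}) ∈ r :=
    Filter.inter_mem (Filter.iInter_mem.mpr hA) (hr δ hδ)
  obtain ⟨a, haA, haS, haδ⟩ := Ultrafilter.nonempty_of_mem hmem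
  refine ⟨a, ∅, haS, haδ, fun h => h.elim, fun t ht => absurd ht (Finset.notMem_empty t),
    fun i => by simpa using hδ, fun i => ?_⟩
  simpa using Set.mem_iInter.mp haA i

lemma add_sum_mem_S {S : Set ℝ} (hSadd : ∀ x ∈ S, ∀ z ∈ S, x + z ∈ S)
    {y : ℕ → ℕ → ℝ} (hy : ∀ i t, y i t ∈ S) (i : ℕ) {a : ℝ} (ha : a ∈ S) (H : Finset ℕ) :
    a + ∑ t ∈ H, y i t ∈ S := by
  classical
  induction H using Finset.induction_on with
  | empty => simpa using ha
  | insert t Ht hni ih =>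
    rw [Finset.sum_insert hni]
    have heq : a + (y i t + ∑ u ∈ Ht, y i u) = (y i t) + (a + ∑ u ∈ Ht, y i u) := by ring
    rw [heq]
    exact hSadd _ (hy i t) _ ih

lemma EISet_sub_Y {S : Set ℝ} {y : ℕ → ℕ → ℝ} {ℓ : ℕ} {ne : Prop}
    (hSadd : ∀ x ∈ S, ∀ z ∈ S, x + z ∈ S) (hy : ∀ i t, y i t ∈ S)
    {x : PU ℓ} (hx : x ∈ EISet S y ℓ ne) : ∀ i, x i ∈ zeroPlusAdd S := by
  classical
  intro i ε hε
  by_contra hmem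
  have hcompl : {z : ℝ | z ∈ S ∧ z < ε}ᶜ ∈ x i := (Ultrafilter.compl_mem_iff_notMem).mpr hmem
  rw [mem_EISet_iff] at hx
  obtain ⟨a, H, ha, haδ, -, -, hsum, hval⟩ := hx 0 (ε/2) (by linarith)
    (fun j => if j = i then {z : ℝ | z ∈ S ∧ z < ε}ᶜ else Set.univ)
    (fun j => by
      by_cases h : j = i
      · subst h; simpa using hcompl
      · show (if j = i then _ else Set.univ) ∈ x j
        rw [if_neg h]; exact Filter.univ_mem)
  have hvi := hval i
  rw [if_pos rfl] at hvi
  apply hvi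
  refine ⟨add_sum_mem_S hSadd hy (i : ℕ) ha H, ?_⟩
  have := hsum i
  linarith

lemma EISet_nonempty {S : Set ℝ} {y : ℕ → ℕ → ℝ} {ℓ : ℕ} {ne : Prop}
    (hSdense : ∀ a b : ℝ, 0 ≤ a → a < b → ∃ s ∈ S, s ∈ Set.Ioo a b)
    (hY : ∀ i : ℕ, ∀ ε : ℝ, 0 < ε → ∃ m : ℕ, ∀ H : Finset ℕ, H.Nonempty →
      (∀ t ∈ H, m ≤ t) → ∑ t ∈ H, y i t < ε) :
    (EISet S y ℓ ne).Nonempty := by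
  classical
  have hW : ∀ (m : ℕ) (δ : ℝ), 0 < δ → (WSet S y ℓ ne m δ).Nonempty := by
    intro m δ hδ
    obtain ⟨a, haS, ha⟩ := hSdense 0 δ le_rfl hδ
    have haδ := ha.2
    choose mm hmm using fun i : Fin (ℓ + 1) => hY (i : ℕ) δ hδ
    set Mx := max m (Finset.univ.sup mm) with hMx
    refine ⟨tupP y ℓ a {Mx}, a, {Mx}, haS, haδ, fun _ => ⟨Mx, Finset.mem_singleton_self _⟩,
      ?_, ?_, rfl⟩
    · intro t ht
      rw [Finset.mem_singleton] at ht
      subst ht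
      exact le_max_left _ _
    · intro i
      apply hmm i {Mx} ⟨Mx, Finset.mem_singleton_self _⟩
      intro t ht
      rw [Finset.mem_singleton] at ht
      subst ht
      exact le_trans (Finset.le_sup (Finset.mem_univ i)) (le_max_right _ _)
  have hrw : EISet S y ℓ ne =
      ⋂ q : ℕ × {δ : ℝ // 0 < δ}, closure (WSet S y ℓ ne q.1 q.2.1) := by
    ext x
    simp only [EISet, Set.mem_iInter]
    constructor
    · intro h q; exact h q.1 q.2.1 q.2.2
    · intro h m δ hδ; exact h (m, ⟨δ, hδ⟩)
  rw [hrw]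
  apply IsCompact.nonempty_iInter_of_directed_nonempty_isCompact_isClosed
  · intro q q'
    refine ⟨(max q.1 q'.1, ⟨min q.2.1 q'.2.1, lt_min q.2.2 q'.2.2⟩), ?_, ?_⟩
    · apply closure_mono
      rintro x ⟨a, H, h1, h2, h3, h4, h5, h6⟩
      exact ⟨a, H, h1, lt_of_lt_of_le h2 (min_le_left _ _),
        h3, fun t ht => le_trans (le_max_left _ _) (h4 t ht),
        fun i => lt_of_lt_of_le (h5 i) (min_le_left _ _), h6⟩
    · apply closure_mono
      rintro x ⟨a, H, h1, h2, h3, h4, h5, h6⟩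
      exact ⟨a, H, h1, lt_of_lt_of_le h2 (min_le_right _ _),
        h3, fun t ht => le_trans (le_max_right _ _) (h4 t ht),
        fun i => lt_of_lt_of_le (h5 i) (min_le_right _ _), h6⟩
  · intro q; exact (hW q.1 q.2.1 q.2.2).mono subset_closure
  · intro q; exact isClosed_closure.isCompact
  · intro q; exact isClosed_closure

lemma EISet_closed {S : Set ℝ} {y : ℕ → ℕ → ℝ} {ℓ : ℕ} {ne : Prop} :
    IsClosed (EISet S y ℓ ne) :=
  isClosed_iInter fun _ => isClosed_iInter fun _ => isClosed_iInter fun _ => isClosed_closure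

end Product

lemma coreLemma (S : Set ℝ)
    (hSadd : ∀ x ∈ S, ∀ z ∈ S, x + z ∈ S)
    (hSdense : ∀ a b : ℝ, 0 ≤ a → a < b → ∃ s ∈ S, s ∈ Set.Ioo a b)
    (y : ℕ → ℕ → ℝ) (hy : ∀ i t, y i t ∈ S)
    (hYy : ∀ i : ℕ, ∀ ε : ℝ, 0 < ε → ∃ m : ℕ, ∀ H : Finset ℕ, H.Nonempty →
      (∀ t ∈ H, m ≤ t) → ∑ t ∈ H, y i t < ε)
    (p : Ultrafilter ℝ) (hpZ : p ∈ zeroPlusAdd S) (hpp : p + p = p)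
    (hpmin : ∀ I, IsIdealOfZeroPlus S I → p ∈ I)
    (ℓ m : ℕ) (δ : ℝ) (hδ : 0 < δ) (C : Set ℝ) (hC : C ∈ p) :
    ∃ a H, a ∈ S ∧ a < δ ∧ H.Nonempty ∧ (∀ t ∈ H, m ≤ t) ∧
      ∀ i ≤ ℓ, a + ∑ t ∈ H, y i t ∈ C := by
  classical
  obtain ⟨L, hLI, hLmin, hpL⟩ := exists_minLI_containing S hSadd p hpZ hpmin
  set Z := zeroPlusAdd S with hZdef
  set Y : Set (PU ℓ) := {x | ∀ i, x i ∈ Z} with hYdef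
  set Lp : Set (PU ℓ) := {x | ∀ i, x i ∈ L} with hLpdef
  have hYs : ∀ x ∈ Y, ∀ z ∈ Y, x + z ∈ Y := by
    intro x hx z hz i
    exact zeroPlus_add_mem hSadd _ (hx i) _ (hz i)
  have hLpLI : IsLI Y Lp := by
    refine ⟨⟨fun _ => p, fun i => hpL⟩, fun x hx i => hLI.2.1 (hx i),
      fun x hx z hz i => hLI.2.2 _ (hx i) _ (hz i)⟩
  have hLpmin : ∀ L', IsLI Y L' → L' ⊆ Lp → L' = Lp := by
    intro L' hL' hsub
    apply Set.Subset.antisymm hsub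
    obtain ⟨x, hx⟩ := hL'.1
    intro w hw
    have hw' : ∀ i, w i ∈ L := hw
    have hvi : ∀ i : Fin (ℓ + 1), ∃ v, v ∈ Z ∧ v + x i = w i := by
      intro i
      have hxiL : x i ∈ L := hsub hx i
      have himg : IsLI Z ((· + x i) '' Z) := by
        refine ⟨⟨p + x i, p, hpZ, rfl⟩, ?_, ?_⟩
        · rintro _ ⟨u, hu, rfl⟩
          exact zeroPlus_add_mem hSadd _ hu _ (hLI.2.1 hxiL)
        · rintro z hz _ ⟨u, hu, rfl⟩
          exact ⟨z + u, zeroPlus_add_mem hSadd _ hz _ hu, by exact add_assoc z u (x i)⟩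
      have hsubL : ((· + x i) '' Z) ⊆ L := by
        rintro _ ⟨u, hu, rfl⟩
        exact hLI.2.2 _ hu _ hxiL
      have heq := hLmin _ himg hsubL
      have hwi : w i ∈ ((· + x i) '' Z) := by rw [heq]; exact hw' i
      obtain ⟨v, hv, hve⟩ := hwi
      exact ⟨v, hv, hve⟩
    choose v hv1 hv2 using hvi
    have hadd : v + x = w := funext fun i => hv2 i
    have := hL'.2.2 v (fun i => hv1 i) x hx
    rwa [hadd] at this
  set pbar : PU ℓ := fun _ => p with hpbardef
  have hpbarL : pbar ∈ Lp := fun _ => hpL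
  have hpbaridem : pbar + pbar = pbar := funext fun _ => hpp
  set E := EISet S y ℓ False with hEdef
  set I := EISet S y ℓ True with hIdef
  have hEY : E ⊆ Y := fun x hx i => EISet_sub_Y hSadd hy hx i
  have hEs : ∀ x ∈ E, ∀ z ∈ E, x + z ∈ E := fun x hx z hz =>
    EISet_mono (fun h => Or.inl h) (add_mem_EISet hSadd hx hz)
  have hpbarE : pbar ∈ E := diag_mem_EISet hpZ
  have hEc : IsCompact E := EISet_closed.isCompact
  have hIne : I.Nonempty := EISet_nonempty hSdense hYy
  have hIE : I ⊆ E := EISet_mono (fun h => h.elim)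
  have hAbsorb : ∀ x ∈ E, ∀ z ∈ I, x + z ∈ I ∧ z + x ∈ I := by
    intro x hx z hz
    constructor
    · exact EISet_mono (fun h => Or.inr h) (add_mem_EISet hSadd hx hz)
    · exact EISet_mono (fun h => Or.inl h) (add_mem_EISet hSadd hz hx)
  have hpI : pbar ∈ I :=
    minIdem_mem_ideal (PU_cont ℓ) Y Lp E I pbar hYs hLpLI hLpmin hpbarL hpbarE hpbaridem
      hEY hEc hEs hIne hIE hAbsorb
  rw [hIdef, mem_EISet_iff] at hpI
  obtain ⟨a, H, h1, h2, h3, h4, h5, h6⟩ := hpI m δ hδ (fun _ => C) (fun _ => hC)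
  refine ⟨a, H, h1, h2, h3 trivial, h4, ?_⟩
  intro i hi
  exact h6 ⟨i, Nat.lt_succ_of_le hi⟩

def starSet (p : Ultrafilter ℝ) (C : Set ℝ) : Set ℝ :=
  {x | x ∈ C ∧ {z | x + z ∈ C} ∈ p}

lemma starSet_mem {p : Ultrafilter ℝ} (hpp : p + p = p) {C : Set ℝ} (hC : C ∈ p) :
    starSet p C ∈ p := by
  have h1 : {x : ℝ | {z : ℝ | x + z ∈ C} ∈ p} ∈ p := by
    have h := hC
    rw [← hpp, mem_add_ultra] at h
    exact h
  exact Filter.inter_mem hC h1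

lemma starSet_shift {p : Ultrafilter ℝ} (hpp : p + p = p) {C : Set ℝ} {x : ℝ}
    (hx : x ∈ starSet p C) : {z | x + z ∈ starSet p C} ∈ p := by
  have hB : {z : ℝ | x + z ∈ C} ∈ p := hx.2
  have hT : {z : ℝ | {w : ℝ | (x + z) + w ∈ C} ∈ p} ∈ p := by
    have h2 := hB
    rw [← hpp, mem_add_ultra] at h2
    refine Filter.mem_of_superset h2 ?_
    intro r hr
    refine Filter.mem_of_superset hr ?_
    intro s hs
    simpa [add_assoc] using hs
  refine Filter.mem_of_superset (Filter.inter_mem hB hT) ?_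
  rintro z ⟨h1, h2⟩
  exact ⟨h1, h2⟩

/-- The Central Sets Theorem near zero (Hindman–Leader). -/
theorem central_sets_theorem_near_zero (S : Set ℝ)
    (hSpos : ∀ x ∈ S, 0 < x)
    (hSadd : ∀ x ∈ S, ∀ y ∈ S, x + y ∈ S)
    (hSdense : ∀ a b : ℝ, 0 ≤ a → a < b → ∃ s ∈ S, s ∈ Set.Ioo a b)
    (A : Set ℝ) (hAS : A ⊆ S)
    (hcentral : ∃ p : Ultrafilter ℝ, IsMinimalIdempotentNearZero S p ∧ A ∈ p)
    (y : ℕ → ℕ → ℝ) (hy : ∀ i t, y i t ∈ S)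
    (hY : ∀ i : ℕ, ∀ ε : ℝ, 0 < ε → ∃ m : ℕ, ∀ H : Finset ℕ, H.Nonempty →
      (∀ t ∈ H, m ≤ t) → ∑ t ∈ H, y i t < ε) :
    ∃ a : ℕ → ℝ, ∃ H : ℕ → Finset ℕ,
      (∀ n : ℕ, 1 ≤ n → a n ∈ S ∧ a n < 1 / n) ∧
      (∀ n : ℕ, 1 ≤ n → (H n).Nonempty ∧ ∀ s ∈ H n, ∀ t ∈ H (n + 1), s < t) ∧
      (∀ f : ℕ → ℕ, (∀ n, f n ≤ n) →
        ∀ F : Finset ℕ, F.Nonempty → (∀ n ∈ F, 1 ≤ n) →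
          ∑ n ∈ F, (a n + ∑ t ∈ H n, y (f n) t) ∈ A) := by
  classical
  obtain ⟨p, ⟨hpZ, hpp, hpmin⟩, hAp⟩ := hcentral
  set good : Set ℝ → Prop :=
    fun C => C ∈ p ∧ C ⊆ A ∧ ∀ v ∈ C, {z | v + z ∈ C} ∈ p with hgood
  have hgoodB : good (starSet p A) :=
    ⟨starSet_mem hpp hAp, fun x hx => hx.1, fun v hv => starSet_shift hpp hv⟩
  have hstep : ∀ (k : ℕ) (Hprev : Finset ℕ) (C : {C : Set ℝ // good C}),
      ∃ r : ℝ × Finset ℕ × {D : Set ℝ // good D},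
        r.1 ∈ S ∧ r.1 < 1 / ((k : ℝ) + 1) ∧ r.2.1.Nonempty ∧
        (∀ t ∈ r.2.1, Hprev.sup id + 1 ≤ t) ∧
        (∀ i ≤ k + 1, r.1 + ∑ t ∈ r.2.1, y i t ∈ C.1) ∧ r.2.2.1 ⊆ C.1 ∧
        (∀ i ≤ k + 1, ∀ z ∈ r.2.2.1, (r.1 + ∑ t ∈ r.2.1, y i t) + z ∈ C.1) := by
    intro k Hprev C
    obtain ⟨hCp, hCA, hCshift⟩ := C.2
    have hδ : (0:ℝ) < 1 / ((k : ℝ) + 1) := by positivity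
    obtain ⟨a, H, h1, h2, h3, h4, h5⟩ :=
      coreLemma S hSadd hSdense y hy hY p hpZ hpp hpmin (k + 1) (Hprev.sup id + 1)
        (1 / ((k : ℝ) + 1)) hδ C.1 hCp
    set D : Set ℝ := C.1 ∩ ⋂ i ∈ Finset.range (k + 2), {z | (a + ∑ t ∈ H, y i t) + z ∈ C.1}
      with hD
    have hDmem : D ∈ p := by
      refine Filter.inter_mem hCp ?_
      rw [Filter.biInter_finset_mem]
      intro i hi
      refine hCshift _ (h5 i ?_)
      have := Finset.mem_range.mp hi
      omega
    have hgoodD : good D := by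
      refine ⟨hDmem, fun x hx => hCA hx.1, ?_⟩
      intro v hv
      have hv1 : v ∈ C.1 := hv.1
      have hv2 : ∀ i ∈ Finset.range (k + 2), (a + ∑ t ∈ H, y i t) + v ∈ C.1 :=
        fun i hi => Set.mem_iInter₂.mp hv.2 i hi
      have hmain : {z | v + z ∈ C.1} ∈ p := hCshift v hv1
      have hall : ({z | v + z ∈ C.1} ∩
          ⋂ i ∈ Finset.range (k + 2), {z | ((a + ∑ t ∈ H, y i t) + v) + z ∈ C.1}) ∈ p := by
        refine Filter.inter_mem hmain ?_
        rw [Filter.biInter_finset_mem]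
        exact fun i hi => hCshift _ (hv2 i hi)
      refine Filter.mem_of_superset hall ?_
      rintro z ⟨hz1, hz2⟩
      refine ⟨hz1, ?_⟩
      apply Set.mem_iInter₂.mpr
      intro i hi
      have hzz := Set.mem_iInter₂.mp hz2 i hi
      show (a + ∑ t ∈ H, y i t) + (v + z) ∈ C.1
      rwa [← add_assoc]
    refine ⟨(a, H, ⟨D, hgoodD⟩), h1, h2, h3, h4, fun i hi => h5 i hi,
      Set.inter_subset_left, ?_⟩
    intro i hi z hz
    exact Set.mem_iInter₂.mp hz.2 i (Finset.mem_range.mpr (by omega))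
  let F : ℕ → ℝ × Finset ℕ × {D : Set ℝ // good D} := fun n =>
    Nat.rec ((0:ℝ), (∅ : Finset ℕ), ⟨starSet p A, hgoodB⟩)
      (fun k prev => Classical.choose (hstep k prev.2.1 prev.2.2)) n
  have hFsucc : ∀ k, F (k + 1) = Classical.choose (hstep k (F k).2.1 (F k).2.2) :=
    fun k => rfl
  have hFspec : ∀ k : ℕ,
      (F (k + 1)).1 ∈ S ∧ (F (k + 1)).1 < 1 / ((k : ℝ) + 1) ∧ (F (k + 1)).2.1.Nonempty ∧
      (∀ t ∈ (F (k + 1)).2.1, (F k).2.1.sup id + 1 ≤ t) ∧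
      (∀ i ≤ k + 1, (F (k + 1)).1 + ∑ t ∈ (F (k + 1)).2.1, y i t ∈ ((F k).2.2 : Set ℝ)) ∧
      ((F (k + 1)).2.2 : Set ℝ) ⊆ ((F k).2.2 : Set ℝ) ∧
      (∀ i ≤ k + 1, ∀ z ∈ ((F (k + 1)).2.2 : Set ℝ),
        ((F (k + 1)).1 + ∑ t ∈ (F (k + 1)).2.1, y i t) + z ∈ ((F k).2.2 : Set ℝ)) := by
    intro k
    rw [hFsucc k]
    exact Classical.choose_spec (hstep k (F k).2.1 (F k).2.2)
  set aa : ℕ → ℝ := fun n => (F n).1 with haa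
  set HH : ℕ → Finset ℕ := fun n => (F n).2.1 with hHH
  set CC : ℕ → Set ℝ := fun n => ((F n).2.2 : Set ℝ) with hCC
  have hCmono : ∀ m n : ℕ, m ≤ n → CC n ⊆ CC m := by
    intro m n hmn
    induction n, hmn using Nat.le_induction with
    | base => exact subset_rfl
    | succ n hmn ih => exact ((hFspec n).2.2.2.2.2.1).trans ih
  have key : ∀ f : ℕ → ℕ, (∀ n, f n ≤ n) → ∀ Fs : Finset ℕ,
      ∀ hne : Fs.Nonempty, (∀ n ∈ Fs, 1 ≤ n) →
      (∑ n ∈ Fs, (aa n + ∑ t ∈ HH n, y (f n) t)) ∈ CC (Fs.min' hne - 1) := by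
    intro f hf Fs
    induction Fs using Finset.strongInduction with
    | _ Fs ih =>
      intro hne h1
      have hnF : Fs.min' hne ∈ Fs := Fs.min'_mem hne
      have hn1 : 1 ≤ Fs.min' hne := h1 _ hnF
      obtain ⟨k, hk⟩ : ∃ k, Fs.min' hne = k + 1 := ⟨Fs.min' hne - 1, by omega⟩
      rw [hk] at hnF
      have hmem : aa (k + 1) + ∑ t ∈ HH (k + 1), y (f (k + 1)) t ∈ CC k :=
        (hFspec k).2.2.2.2.1 (f (k + 1)) (hf (k + 1))
      by_cases hsing : Fs.erase (k + 1) = ∅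
      · have hidx : Fs.min' hne - 1 = k := by omega
        rw [hidx, ← Finset.add_sum_erase _ _ hnF, hsing, Finset.sum_empty, add_zero]
        exact hmem
      · have hne'' : (Fs.erase (k + 1)).Nonempty := Finset.nonempty_iff_ne_empty.mpr hsing
        have hmin'' : k + 2 ≤ (Fs.erase (k + 1)).min' hne'' := by
          apply Finset.le_min'
          intro x hx
          have hx1 : x ∈ Fs := Finset.mem_of_mem_erase hx
          have hx2 : x ≠ k + 1 := Finset.ne_of_mem_erase hx
          have := Fs.min'_le x hx1
          omega
        have hIH := ih (Fs.erase (k + 1)) (Finset.erase_ssubset hnF) hne''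
          (fun x hx => h1 x (Finset.mem_of_mem_erase hx))
        have hsub : CC ((Fs.erase (k + 1)).min' hne'' - 1) ⊆ CC (k + 1) :=
          hCmono (k + 1) _ (by omega)
        have hz : (∑ x ∈ Fs.erase (k + 1), (aa x + ∑ t ∈ HH x, y (f x) t)) ∈ CC (k + 1) :=
          hsub hIH
        have hshift := (hFspec k).2.2.2.2.2.2 (f (k + 1)) (hf (k + 1))
          (∑ x ∈ Fs.erase (k + 1), (aa x + ∑ t ∈ HH x, y (f x) t)) hz
        have hidx : Fs.min' hne - 1 = k := by omega
        rw [hidx, ← Finset.add_sum_erase _ _ hnF]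
        exact hshift
  refine ⟨aa, HH, ?_, ?_, ?_⟩
  · intro n hn
    obtain ⟨k, rfl⟩ : ∃ k, n = k + 1 := ⟨n - 1, by omega⟩
    refine ⟨(hFspec k).1, ?_⟩
    have h := (hFspec k).2.1
    rwa [show ((k : ℝ) + 1) = ((k + 1 : ℕ) : ℝ) by push_cast; ring] at h
  · intro n hn
    obtain ⟨k, rfl⟩ : ∃ k, n = k + 1 := ⟨n - 1, by omega⟩
    refine ⟨(hFspec k).2.2.1, ?_⟩
    intro s hs t ht
    have h4 := (hFspec (k + 1)).2.2.2.1 t ht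
    have hsup : s ≤ ((F (k + 1)).2.1).sup id := Finset.le_sup (f := id) hs
    omega
  · intro f hf Fs hne h1
    have h := key f hf Fs hne h1
    have hsubA : CC (Fs.min' hne - 1) ⊆ A := by
      intro x hx
      have h0 : x ∈ CC 0 := hCmono 0 _ (Nat.zero_le _) hx
      exact h0.1
    exact hsubA h
end

section
/- Let (S,+) be a dense subsemigroup of ((0,∞),+) and suppose there exists a non-principal minimal idempotent p in 0⁺. Fix ε > 0, k, r ≥ 1, and a partition [S ∩ (0,ε)]^k = A₁ ∪ … ∪ A_r of the k-element subsets of S ∩ (0,ε). For each l ∈ ℕ let ⟨y_{l,n}⟩_{n=0}^∞ be a sequence in S (with the sums Σ_{t∈H} y_{l,t} controllable near 0 as in the Hindman–Leader hypothesis). Then there exist i ∈ {1,…,r}, a sequence ⟨a_n⟩_{n=0}^∞ in S with a_n → 0, and finite nonempty subsets α₀ < α₁ < … of ω such that for every g : ω → ω with g(n) ≤ n for all n, every k-element set of the form {z_{β₁}, …, z_{β_k}} with β₁ < … < β_k finite nonempty subsets of ω and z_β = Σ_{n∈β}(a_n + Σ_{t∈α_n} y_{g(n),t}) belongs to A_i.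 -/
attribute [local instance] Ultrafilter.add

namespace MCST

attribute [local instance] Ultrafilter.addSemigroup

lemma memAddU {U V : Ultrafilter ℝ} {s : Set ℝ} :
    s ∈ U + V ↔ {a | {b | a + b ∈ s} ∈ V} ∈ U := Iff.rfl

section Base

variable {S : Set ℝ}
variable (hSpos : ∀ x ∈ S, 0 < x)
variable (hSadd : ∀ x ∈ S, ∀ y ∈ S, x + y ∈ S)
variable (hSdense : ∀ a b : ℝ, 0 ≤ a → a < b → ∃ s ∈ S, s ∈ Set.Ioo a b)

lemma zp_add (hSadd : ∀ x ∈ S, ∀ y ∈ S, x + y ∈ S) {q q' : Ultrafilter ℝ}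
    (hq : q ∈ zeroPlusAdd S) (hq' : q' ∈ zeroPlusAdd S) : q + q' ∈ zeroPlusAdd S := by
  intro ε hε
  rw [memAddU]
  refine Filter.mem_of_superset (hq (ε/2) (by linarith)) ?_
  intro a ha
  refine Filter.mem_of_superset (hq' (ε/2) (by linarith)) ?_
  intro b hb
  exact ⟨hSadd _ ha.1 _ hb.1, by simp only [Set.mem_setOf_eq] at ha hb ⊢; linarith [ha.2, hb.2]⟩

lemma zp_nonempty (hSdense : ∀ a b : ℝ, 0 ≤ a → a < b → ∃ s ∈ S, s ∈ Set.Ioo a b) :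
    (zeroPlusAdd S).Nonempty := by
  let f : {e : ℝ // 0 < e} → Filter ℝ := fun e => Filter.principal {x | x ∈ S ∧ x < e}
  have hne : ∀ e : {e : ℝ // 0 < e}, ({x | x ∈ S ∧ x < e.1}).Nonempty := by
    rintro ⟨e, he⟩
    obtain ⟨s, hs, hs2⟩ := hSdense 0 e le_rfl he
    exact ⟨s, hs, hs2.2⟩
  have hdir : Directed (· ≥ ·) f := by
    rintro ⟨e, he⟩ ⟨e', he'⟩
    refine ⟨⟨min e e', lt_min he he'⟩, ?_, ?_⟩ <;>
    · simp only [f, Filter.le_principal_iff, Filter.mem_principal]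
      intro x hx
      exact ⟨hx.1, lt_of_lt_of_le hx.2 (by simp)⟩
  have : (⨅ e, f e).NeBot := Filter.iInf_neBot_of_directed hdir
    (fun e => Filter.principal_neBot_iff.2 (hne e))
  obtain ⟨u, hu⟩ := Ultrafilter.exists_le (⨅ e, f e)
  refine ⟨u, fun ε hε => ?_⟩
  exact hu (le_trans (iInf_le f ⟨ε, hε⟩) le_rfl (Filter.mem_principal_self _))

lemma zp_closed : IsClosed (zeroPlusAdd S) := by
  have : zeroPlusAdd S = ⋂ (e : {e : ℝ // 0 < e}), {q : Ultrafilter ℝ | {x | x ∈ S ∧ x < e.1} ∈ q} := by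
    ext q
    simp only [Set.mem_iInter, Set.mem_setOf_eq, zeroPlusAdd, Subtype.forall]
  rw [this]
  exact isClosed_iInter fun e => ultrafilter_isClosed_basic _

/-- closed left ideals of `0⁺` -/
def IsLID (S : Set ℝ) (L : Set (Ultrafilter ℝ)) : Prop :=
  L.Nonempty ∧ IsClosed L ∧ L ⊆ zeroPlusAdd S ∧
    ∀ q ∈ zeroPlusAdd S, ∀ x ∈ L, q + x ∈ L

lemma exists_minimal_LID_le {L : Set (Ultrafilter ℝ)} (hL : IsLID S L) :
    ∃ M, M ⊆ L ∧ Minimal (IsLID S) M := by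
  refine zorn_superset_nonempty {N | IsLID S N} ?_ L hL
  intro c hc hchain hcne
  refine ⟨⋂₀ c, ⟨?_, ?_, ?_, ?_⟩, fun s hs => Set.sInter_subset_of_mem hs⟩
  · rw [Set.sInter_eq_iInter]
    haveI : Nonempty c := hcne.coe_sort
    apply IsCompact.nonempty_iInter_of_directed_nonempty_isCompact_isClosed
    · rintro ⟨i, hi⟩ ⟨j, hj⟩
      rcases hchain.total hi hj with h | h
      · exact ⟨⟨i, hi⟩, le_rfl, h⟩
      · exact ⟨⟨j, hj⟩, h, le_rfl⟩
    · exact fun i => (hc i.2).1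
    · exact fun i => ((hc i.2).2.1).isCompact
    · exact fun i => (hc i.2).2.1
  · exact isClosed_sInter fun t ht => (hc ht).2.1
  · obtain ⟨t, ht⟩ := hcne
    exact (Set.sInter_subset_of_mem ht).trans (hc ht).2.2.1
  · intro q hq x hx
    rw [Set.mem_sInter] at hx ⊢
    exact fun t ht => (hc ht).2.2.2 q hq x (hx t ht)

lemma zp_isLID (hSadd : ∀ x ∈ S, ∀ y ∈ S, x + y ∈ S)
    (hSdense : ∀ a b : ℝ, 0 ≤ a → a < b → ∃ s ∈ S, s ∈ Set.Ioo a b) :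
    IsLID S (zeroPlusAdd S) :=
  ⟨zp_nonempty hSdense, zp_closed, le_rfl, fun q hq x hx => zp_add hSadd hq hx⟩

lemma LID_image_min (hSadd : ∀ x ∈ S, ∀ y ∈ S, x + y ∈ S) {L : Set (Ultrafilter ℝ)}
    (hL : Minimal (IsLID S) L) {q : Ultrafilter ℝ} (hq : q ∈ zeroPlusAdd S) :
    Minimal (IsLID S) ((· + q) '' L) := by
  obtain ⟨⟨hne, hcl, hsub, hli⟩, hmin⟩ := hL
  constructor
  · refine ⟨hne.image _, ?_, ?_, ?_⟩
    · exact (hcl.isCompact.image (Ultrafilter.continuous_add_left q)).isClosed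
    · rintro _ ⟨x, hx, rfl⟩
      exact zp_add hSadd (hsub hx) hq
    · rintro w hw _ ⟨x, hx, rfl⟩
      exact ⟨w + x, hli w hw x hx, add_assoc w x q⟩
  · intro M hM hML
    have hN : IsLID S (L ∩ (· + q) ⁻¹' M) := by
      refine ⟨?_, ?_, fun x hx => hsub hx.1, ?_⟩
      · obtain ⟨m, hm⟩ := hM.1
        obtain ⟨x, hx, rfl⟩ := hML hm
        exact ⟨x, hx, hm⟩
      · exact hcl.inter (hM.2.1.preimage (Ultrafilter.continuous_add_left q))
      · intro w hw x hx
        refine ⟨hli w hw x hx.1, ?_⟩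
        have : w + x + q = w + (x + q) := add_assoc _ _ _
        simp only [Set.mem_preimage, this]
        exact hM.2.2.2 w hw _ hx.2
    have := hmin hN Set.inter_subset_left
    rintro _ ⟨x, hx, rfl⟩
    exact (this hx).2

def Kstar (S : Set ℝ) : Set (Ultrafilter ℝ) := {q | ∃ L, Minimal (IsLID S) L ∧ q ∈ L}

lemma Kstar_isIdeal (hSadd : ∀ x ∈ S, ∀ y ∈ S, x + y ∈ S)
    (hSdense : ∀ a b : ℝ, 0 ≤ a → a < b → ∃ s ∈ S, s ∈ Set.Ioo a b) :
    IsIdealOfZeroPlus S (Kstar S) := by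
  obtain ⟨M, _, hM⟩ := exists_minimal_LID_le (zp_isLID hSadd hSdense)
  obtain ⟨x, hx⟩ := hM.1.1
  refine ⟨⟨x, M, hM, hx⟩, ?_, ?_⟩
  · rintro q ⟨L, hL, hq⟩
    exact hL.1.2.2.1 hq
  · rintro q hq x ⟨L, hL, hx⟩
    constructor
    · exact ⟨L, hL, hL.1.2.2.2 q hq x hx⟩
    · exact ⟨(· + q) '' L, LID_image_min hSadd hL hq, ⟨x, hx, rfl⟩⟩

lemma min_LID_absorb (hSadd : ∀ x ∈ S, ∀ y ∈ S, x + y ∈ S)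
    (hSdense : ∀ a b : ℝ, 0 ≤ a → a < b → ∃ s ∈ S, s ∈ Set.Ioo a b)
    {L : Set (Ultrafilter ℝ)} (hL : Minimal (IsLID S) L) {v : Ultrafilter ℝ} (hv : v ∈ L)
    {w : Ultrafilter ℝ} (hw : w ∈ L) : ∃ u ∈ zeroPlusAdd S, u + v = w := by
  have himg : IsLID S ((· + v) '' (zeroPlusAdd S)) := by
    refine ⟨(zp_nonempty hSdense).image _, ?_, ?_, ?_⟩
    · exact ((zp_closed.isCompact).image (Ultrafilter.continuous_add_left v)).isClosed
    · rintro _ ⟨x, hx, rfl⟩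
      exact zp_add hSadd hx (hL.1.2.2.1 hv)
    · rintro q hq _ ⟨x, hx, rfl⟩
      exact ⟨q + x, zp_add hSadd hq hx, add_assoc q x v⟩
  have hsubL : ((· + v) '' (zeroPlusAdd S)) ⊆ L := by
    rintro _ ⟨x, hx, rfl⟩
    exact hL.1.2.2.2 x hx v hv
  have := hL.2 himg hsubL
  obtain ⟨u, hu, huv⟩ := this hw
  exact ⟨u, hu, huv⟩

end Base

end MCST

namespace MCST

attribute [local instance] Ultrafilter.add Ultrafilter.addSemigroup

section Key

variable {S : Set ℝ} {y : ℕ → ℕ → ℝ}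

lemma sum_mem_S (hSadd : ∀ x ∈ S, ∀ y ∈ S, x + y ∈ S) {v : ℕ → ℝ} :
    ∀ {β : Finset ℕ}, β.Nonempty → (∀ t ∈ β, v t ∈ S) → ∑ t ∈ β, v t ∈ S := by
  intro β hne
  induction hne using Finset.Nonempty.cons_induction with
  | singleton a => intro h; simpa using h a (by simp)
  | cons a s ha hs ih =>
      intro h
      rw [Finset.sum_cons]
      exact hSadd _ (h a (Finset.mem_cons_self a s)) _
        (ih fun t ht => h t (Finset.mem_cons_of_mem ht))

/-- The ideal `𝓘` in the product space. -/
def IdlSet (S : Set ℝ) (y : ℕ → ℕ → ℝ) (m : ℕ) : Set (Fin (m+1) → Ultrafilter ℝ) :=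
  {x | (∀ l, x l ∈ zeroPlusAdd S) ∧
    ∀ X : Fin (m+1) → Set ℝ, (∀ l, X l ∈ x l) → ∀ n₀ : ℕ,
      ∃ a ∈ S, ∃ α : Finset ℕ, α.Nonempty ∧ (∀ t ∈ α, n₀ ≤ t) ∧
        ∀ l, a + ∑ t ∈ α, y (l : ℕ) t ∈ X l}

lemma idl_nonempty (hSadd : ∀ x ∈ S, ∀ y ∈ S, x + y ∈ S)
    (hSdense : ∀ a b : ℝ, 0 ≤ a → a < b → ∃ s ∈ S, s ∈ Set.Ioo a b)
    (hy : ∀ l n, y l n ∈ S)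
    (hY : ∀ l : ℕ, ∀ δ : ℝ, 0 < δ → ∃ mm : ℕ, ∀ H : Finset ℕ, H.Nonempty →
      (∀ t ∈ H, mm ≤ t) → ∑ t ∈ H, y l t < δ)
    (m : ℕ) : (IdlSet S y m).Nonempty := by
  classical
  set Pgood : ℕ → ℝ → Set (ℝ × Finset ℕ) := fun n₀ δ =>
    {q | q.1 ∈ S ∧ q.2.Nonempty ∧ (∀ t ∈ q.2, n₀ ≤ t) ∧
      ∀ l ≤ m, q.1 + ∑ t ∈ q.2, y l t < δ} with hPdef
  have hPne : ∀ (n₀ : ℕ) (δ : ℝ), 0 < δ → (Pgood n₀ δ).Nonempty := by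
    intro n₀ δ hδ
    obtain ⟨a, haS, ha2⟩ := hSdense 0 (δ/2) le_rfl (by linarith)
    have hchoice : ∀ l : ℕ, ∃ mm : ℕ, ∀ H : Finset ℕ, H.Nonempty →
        (∀ t ∈ H, mm ≤ t) → ∑ t ∈ H, y l t < δ/2 := fun l => hY l (δ/2) (by linarith)
    choose Mb hMb using hchoice
    refine ⟨(a, {max n₀ ((Finset.range (m+1)).sup Mb)}), haS,
      ⟨_, Finset.mem_singleton_self _⟩, ?_, ?_⟩
    · intro t ht
      rw [Finset.mem_singleton] at ht
      subst ht
      exact le_max_left _ _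
    · intro l hl
      have hspec := hMb l {max n₀ ((Finset.range (m+1)).sup Mb)}
        ⟨_, Finset.mem_singleton_self _⟩ ?_
      · simp only [Finset.sum_singleton] at hspec ⊢
        have := ha2.2
        linarith
      · intro t ht
        rw [Finset.mem_singleton] at ht
        subst ht
        exact le_trans (Finset.le_sup (Finset.mem_range.2 (Nat.lt_succ_of_le hl)))
          (le_max_right _ _)
  haveI : Nonempty (ℕ × {d : ℝ // 0 < d}) := ⟨(0, ⟨1, one_pos⟩)⟩
  have hdir : Directed (· ≥ ·) (fun nd : ℕ × {d : ℝ // 0 < d} =>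
      Filter.principal (Pgood nd.1 nd.2.1)) := by
    rintro ⟨n₀, δ, hδ⟩ ⟨n₁, δ', hδ'⟩
    refine ⟨(max n₀ n₁, ⟨min δ δ', lt_min hδ hδ'⟩), ?_, ?_⟩ <;>
    · simp only [Filter.le_principal_iff, Filter.mem_principal]
      rintro ⟨a, α⟩ ⟨h1, h2, h3, h4⟩
      refine ⟨h1, h2, fun t ht => le_trans (by simp) (h3 t ht), fun l hl =>
        lt_of_lt_of_le (h4 l hl) (by simp)⟩
  have hNB : (⨅ nd : ℕ × {d : ℝ // 0 < d},
      Filter.principal (Pgood nd.1 nd.2.1)).NeBot :=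
    Filter.iInf_neBot_of_directed hdir
      (fun nd => Filter.principal_neBot_iff.2 (hPne nd.1 nd.2.1 nd.2.2))
  obtain ⟨u, hu⟩ := Ultrafilter.exists_le
    (⨅ nd : ℕ × {d : ℝ // 0 < d}, Filter.principal (Pgood nd.1 nd.2.1))
  have hmemP : ∀ (n₀ : ℕ) (δ : ℝ), 0 < δ → Pgood n₀ δ ∈ u := by
    intro n₀ δ hδ
    exact hu (iInf_le (fun nd : ℕ × {d : ℝ // 0 < d} =>
      Filter.principal (Pgood nd.1 nd.2.1)) (n₀, ⟨δ, hδ⟩) (Filter.mem_principal_self _))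
  refine ⟨fun l => u.map (fun q : ℝ × Finset ℕ => q.1 + ∑ t ∈ q.2, y (l : ℕ) t), ?_, ?_⟩
  · intro l ε hε
    rw [Ultrafilter.mem_map]
    refine Filter.mem_of_superset (hmemP 0 ε hε) ?_
    rintro ⟨a, α⟩ ⟨h1, h2, _, h4⟩
    exact ⟨hSadd _ h1 _ (sum_mem_S hSadd h2 (fun t _ => hy _ t)), h4 _ (Fin.is_le l)⟩
  · intro X hX n₀
    have hT : (Pgood n₀ 1 ∩ ⋂ l : Fin (m+1),
        (fun q : ℝ × Finset ℕ => q.1 + ∑ t ∈ q.2, y (l : ℕ) t) ⁻¹' (X l)) ∈ u := by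
      refine Filter.inter_mem (hmemP n₀ 1 one_pos) (Filter.iInter_mem.2 fun l => ?_)
      exact Ultrafilter.mem_map.1 (hX l)
    obtain ⟨⟨a, α⟩, hq⟩ := Ultrafilter.nonempty_of_mem hT
    refine ⟨a, hq.1.1, α, hq.1.2.1, hq.1.2.2.1, fun l => ?_⟩
    exact Set.mem_iInter.1 hq.2 l

lemma idl_closed (m : ℕ) : IsClosed (IdlSet S y m) := by
  rw [← isOpen_compl_iff, isOpen_iff_forall_mem_open]
  intro x hx
  rw [Set.mem_compl_iff, IdlSet, Set.mem_setOf_eq] at hx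
  push_neg at hx
  by_cases hA : ∀ l, x l ∈ zeroPlusAdd S
  · obtain ⟨X, hX, n₀, hno⟩ := hx hA
    refine ⟨⋂ l, (fun x' : Fin (m+1) → Ultrafilter ℝ => x' l) ⁻¹' {u | X l ∈ u}, ?_, ?_, ?_⟩
    · intro x' hx'
      rw [Set.mem_compl_iff]
      intro hx'mem
      obtain ⟨a, haS, α, hne, hge, hmem⟩ := hx'mem.2 X (fun l => Set.mem_iInter.1 hx' l) n₀
      obtain ⟨l, hl⟩ := hno a haS α hne hge
      exact hl (hmem l)
    · exact isOpen_iInter_of_finite fun l =>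
        (ultrafilter_isOpen_basic _).preimage (continuous_apply l)
    · exact Set.mem_iInter.2 hX
  · push_neg at hA
    obtain ⟨l, hl⟩ := hA
    refine ⟨(fun x' : Fin (m+1) → Ultrafilter ℝ => x' l) ⁻¹' (zeroPlusAdd S)ᶜ, ?_, ?_, hl⟩
    · intro x' hx'
      rw [Set.mem_compl_iff]
      intro hx'mem
      exact hx' (hx'mem.1 l)
    · exact (zp_closed.isOpen_compl).preimage (continuous_apply l)

lemma diag_add_idl (hSadd : ∀ x ∈ S, ∀ y ∈ S, x + y ∈ S) {m : ℕ} {q : Ultrafilter ℝ}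
    (hq : q ∈ zeroPlusAdd S) {x : Fin (m+1) → Ultrafilter ℝ} (hx : x ∈ IdlSet S y m) :
    (fun l => q + x l) ∈ IdlSet S y m := by
  refine ⟨fun l => zp_add hSadd hq (hx.1 l), ?_⟩
  intro X hX n₀
  have hC : ({z | z ∈ S ∧ z < 1} ∩ ⋂ l, {a | {b | a + b ∈ X l} ∈ x l}) ∈ q :=
    Filter.inter_mem (hq 1 one_pos) (Filter.iInter_mem.2 fun l => (memAddU).1 (hX l))
  obtain ⟨c, hc⟩ := Ultrafilter.nonempty_of_mem hC
  obtain ⟨a, haS, α, hne, hge, hmem⟩ := hx.2 (fun l => {b | c + b ∈ X l})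
    (fun l => Set.mem_iInter.1 hc.2 l) n₀
  refine ⟨c + a, hSadd _ hc.1.1 _ haS, α, hne, hge, fun l => ?_⟩
  have := hmem l
  simp only [Set.mem_setOf_eq] at this
  rwa [← add_assoc] at this

lemma idl_add_diag (hSadd : ∀ x ∈ S, ∀ y ∈ S, x + y ∈ S) {m : ℕ}
    {x : Fin (m+1) → Ultrafilter ℝ} (hx : x ∈ IdlSet S y m) {q : Ultrafilter ℝ}
    (hq : q ∈ zeroPlusAdd S) : (fun l => x l + q) ∈ IdlSet S y m := by
  refine ⟨fun l => zp_add hSadd (hx.1 l) hq, ?_⟩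
  intro X hX n₀
  obtain ⟨a, haS, α, hne, hge, hmem⟩ := hx.2 (fun l => {a | {b | a + b ∈ X l} ∈ q})
    (fun l => (memAddU).1 (hX l)) n₀
  have hC : ({z | z ∈ S ∧ z < 1} ∩
      ⋂ l, {b | (a + ∑ t ∈ α, y (l : ℕ) t) + b ∈ X l}) ∈ q :=
    Filter.inter_mem (hq 1 one_pos) (Filter.iInter_mem.2 fun l => hmem l)
  obtain ⟨c, hc⟩ := Ultrafilter.nonempty_of_mem hC
  refine ⟨a + c, hSadd _ haS _ hc.1.1, α, hne, hge, fun l => ?_⟩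
  have := Set.mem_iInter.1 hc.2 l
  simp only [Set.mem_setOf_eq] at this
  rwa [add_right_comm] at this

lemma idl_add_idl (hSadd : ∀ x ∈ S, ∀ y ∈ S, x + y ∈ S) {m : ℕ}
    {x x' : Fin (m+1) → Ultrafilter ℝ} (hx : x ∈ IdlSet S y m) (hx' : x' ∈ IdlSet S y m) :
    x + x' ∈ IdlSet S y m := by
  refine ⟨fun l => zp_add hSadd (hx.1 l) (hx'.1 l), ?_⟩
  intro X hX n₀
  obtain ⟨a, haS, α, hne, hge, hmem⟩ := hx.2 (fun l => {c | {b | c + b ∈ X l} ∈ x' l})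
    (fun l => (memAddU).1 (hX l)) n₀
  obtain ⟨a', ha'S, α', hne', hge', hmem'⟩ := hx'.2
    (fun l => {b | (a + ∑ t ∈ α, y (l : ℕ) t) + b ∈ X l}) (fun l => hmem l)
    (max n₀ (α.sup id + 1))
  have hdisj : Disjoint α α' := by
    rw [Finset.disjoint_left]
    intro t ht ht'
    have h1 : α.sup id + 1 ≤ t := le_trans (le_max_right _ _) (hge' t ht')
    have h2 : t ≤ α.sup id := Finset.le_sup (f := id) ht
    omega
  obtain ⟨t0, ht0⟩ := hne
  refine ⟨a + a', hSadd _ haS _ ha'S, α ∪ α', ⟨t0, Finset.mem_union_left _ ht0⟩, ?_, fun l => ?_⟩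
  · intro t ht
    rcases Finset.mem_union.1 ht with h | h
    · exact hge t h
    · exact le_trans (le_max_left _ _) (hge' t h)
  · have := hmem' l
    simp only [Set.mem_setOf_eq] at this
    rw [Finset.sum_union hdisj]
    have heq : (a + ∑ t ∈ α, y (l : ℕ) t) + (a' + ∑ t ∈ α', y (l : ℕ) t)
        = (a + a') + ((∑ t ∈ α, y (l : ℕ) t) + ∑ t ∈ α', y (l : ℕ) t) := by ring
    rwa [heq] at this

lemma keyLemma (hSpos : ∀ x ∈ S, 0 < x) (hSadd : ∀ x ∈ S, ∀ y ∈ S, x + y ∈ S)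
    (hSdense : ∀ a b : ℝ, 0 ≤ a → a < b → ∃ s ∈ S, s ∈ Set.Ioo a b)
    (hy : ∀ l n, y l n ∈ S)
    (hY : ∀ l : ℕ, ∀ δ : ℝ, 0 < δ → ∃ mm : ℕ, ∀ H : Finset ℕ, H.Nonempty →
      (∀ t ∈ H, mm ≤ t) → ∑ t ∈ H, y l t < δ)
    {p : Ultrafilter ℝ} (hp : IsMinimalIdempotentNearZero S p)
    (m : ℕ) (X : Set ℝ) (hX : X ∈ p) (n₀ : ℕ) :
    ∃ a ∈ S, ∃ α : Finset ℕ, α.Nonempty ∧ (∀ t ∈ α, n₀ ≤ t) ∧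
      ∀ l ≤ m, a + ∑ t ∈ α, y l t ∈ X := by
  obtain ⟨hpZ, hpp, hpI⟩ := hp
  obtain ⟨L₀, hL₀min, hpL₀⟩ := hpI (Kstar S) (Kstar_isIdeal hSadd hSdense)
  obtain ⟨x₀, hx₀⟩ := idl_nonempty hSadd hSdense hy hY m
  have hx₁ : (fun l => (p + x₀ l) + p) ∈ IdlSet S y m :=
    idl_add_diag hSadd (diag_add_idl hSadd hpZ hx₀) hpZ
  have hx₁L : ∀ l, (p + x₀ l) + p ∈ L₀ :=
    fun l => hL₀min.1.2.2.2 _ (zp_add hSadd hpZ (hx₀.1 l)) p hpL₀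
  set sset : Set (Fin (m+1) → Ultrafilter ℝ) :=
    IdlSet S y m ∩ {x | ∀ l, x l ∈ L₀} with hsset
  have hscl : IsClosed sset := (idl_closed m).inter (by
    have : {x : Fin (m+1) → Ultrafilter ℝ | ∀ l, x l ∈ L₀}
        = ⋂ l, (fun x : Fin (m+1) → Ultrafilter ℝ => x l) ⁻¹' L₀ := by
      ext x; simp
    rw [this]
    exact isClosed_iInter fun l => hL₀min.1.2.1.preimage (continuous_apply l))
  have hcont : ∀ r : Fin (m+1) → Ultrafilter ℝ, Continuous (· + r) := fun r =>
    continuous_pi fun i => (Ultrafilter.continuous_add_left (r i)).comp (continuous_apply i)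
  have hadd : ∀ x ∈ sset, ∀ x' ∈ sset, x + x' ∈ sset := by
    rintro x hxs x' hx's
    exact ⟨idl_add_idl hSadd hxs.1 hx's.1,
      fun l => hL₀min.1.2.2.2 _ (hxs.1.1 l) _ (hx's.2 l)⟩
  obtain ⟨f, hfs, hff⟩ := exists_idempotent_in_compact_add_subsemigroup hcont sset
    ⟨(fun l => (p + x₀ l) + p), hx₁, hx₁L⟩ hscl.isCompact hadd
  · have hpf : ∀ l : Fin (m+1), p + f l = p := by
      intro l
      obtain ⟨u, huZ, hu⟩ := min_LID_absorb hSadd hSdense hL₀min (hfs.2 l) hpL₀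
      have hfl : f l + f l = f l := congrFun hff l
      calc p + f l = (u + f l) + f l := by rw [hu]
        _ = u + (f l + f l) := add_assoc _ _ _
        _ = u + f l := by rw [hfl]
        _ = p := hu
    have hdiag : (fun _ : Fin (m+1) => p) ∈ IdlSet S y m := by
      have h1 := diag_add_idl hSadd hpZ hfs.1
      have heq : (fun l => p + f l) = fun _ : Fin (m+1) => p := funext fun l => hpf l
      rwa [heq] at h1
    obtain ⟨a, haS, α, hne, hge, hmem⟩ := hdiag.2 (fun _ => X) (fun _ => hX) n₀
    exact ⟨a, haS, α, hne, hge, fun l hl => hmem ⟨l, Nat.lt_succ_of_le hl⟩⟩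

end Key

end MCST

namespace MCST

attribute [local instance] Ultrafilter.add Ultrafilter.addSemigroup

section Tower

variable {r : ℕ}

open Classical in
/-- The downward tower of colorings used in the Milliken–Taylor argument. -/
noncomputable def colTower (p : Ultrafilter ℝ) (A : Fin r → Set (Finset ℝ)) (i₀ : Fin r) :
    ℕ → List ℝ → Fin r
  | 0, v => if h : ∃ i, v.toFinset ∈ A i then h.choose else i₀
  | (d+1), v =>
      if h : ∃ i : Fin r, {x : ℝ | colTower p A i₀ d (v ++ [x]) = i} ∈ p then h.choose else i₀

lemma colTower_succ_mem (p : Ultrafilter ℝ) (A : Fin r → Set (Finset ℝ)) (i₀ : Fin r)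
    (d : ℕ) (v : List ℝ) :
    {x : ℝ | colTower p A i₀ d (v ++ [x]) = colTower p A i₀ (d+1) v} ∈ p := by
  have hex : ∃ i : Fin r, {x : ℝ | colTower p A i₀ d (v ++ [x]) = i} ∈ p := by
    by_contra hcon
    push_neg at hcon
    have hint : (⋂ i : Fin r, {x : ℝ | colTower p A i₀ d (v ++ [x]) = i}ᶜ) ∈ p :=
      Filter.iInter_mem.2 fun i => Ultrafilter.compl_mem_iff_notMem.2 (hcon i)
    obtain ⟨x, hx⟩ := Ultrafilter.nonempty_of_mem hint
    exact (Set.mem_iInter.1 hx (colTower p A i₀ d (v ++ [x]))) rfl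
  rw [colTower, dif_pos hex]
  exact hex.choose_spec

lemma colTower_zero (p : Ultrafilter ℝ) (A : Fin r → Set (Finset ℝ)) (i₀ : Fin r)
    (v : List ℝ) (h : ∃ i, v.toFinset ∈ A i) : v.toFinset ∈ A (colTower p A i₀ 0 v) := by
  rw [colTower, dif_pos h]
  exact h.choose_spec

end Tower

section Star

variable {p : Ultrafilter ℝ}

def starS (p : Ultrafilter ℝ) (C : Set ℝ) : Set ℝ := {v | v ∈ C ∧ {w | v + w ∈ C} ∈ p}

lemma starS_subset (C : Set ℝ) : starS p C ⊆ C := fun _ h => h.1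

lemma starS_mem (hpp : p + p = p) {C : Set ℝ} (hC : C ∈ p) : starS p C ∈ p := by
  have h2 : {a | {b | a + b ∈ C} ∈ p} ∈ p := by
    have hC' := hC
    rw [← hpp] at hC'
    exact (memAddU).1 hC'
  exact Filter.mem_of_superset (Filter.inter_mem hC h2) fun x hx => ⟨hx.1, hx.2⟩

lemma starS_shift (hpp : p + p = p) {C : Set ℝ} {v : ℝ} (hv : v ∈ starS p C) :
    {w | v + w ∈ starS p C} ∈ p := by
  have hD : {w | v + w ∈ C} ∈ p := hv.2
  refine Filter.mem_of_superset (starS_mem hpp hD) ?_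
  intro w hw
  refine ⟨hw.1, ?_⟩
  have h2 : {u | w + u ∈ {w' | v + w' ∈ C}} ∈ p := hw.2
  refine Filter.mem_of_superset h2 ?_
  intro u hu
  simp only [Set.mem_setOf_eq] at hu ⊢
  rwa [← add_assoc] at hu

end Star

section Seq

/-- Generic construction of an infinite sequence by recursive choice. -/
lemma seq_construction {D : Type*} [Inhabited D] (P : ℕ → (ℕ → D) → D → Prop)
    (hloc : ∀ n f g, (∀ m < n, f m = g m) → ∀ d, P n f d → P n g d)
    (hstep : ∀ n (f : ℕ → D), (∀ m < n, P m f (f m)) → ∃ d, P n f d) :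
    ∃ F : ℕ → D, ∀ n, P n F (F n) := by
  classical
  let T : ℕ → Type _ := fun n => {f : ℕ → D // ∀ m < n, P m f (f m)}
  let step : ∀ n, T n → T (n+1) := fun n fh =>
    ⟨Function.update fh.1 n (hstep n fh.1 fh.2).choose, by
      intro m hm
      have hag : ∀ j < m, fh.1 j =
          Function.update fh.1 n (hstep n fh.1 fh.2).choose j := by
        intro j hj
        exact (Function.update_of_ne (by omega) _ _).symm
      rcases Nat.lt_succ_iff_lt_or_eq.1 hm with h | h
      · have hupdm : Function.update fh.1 n (hstep n fh.1 fh.2).choose m = fh.1 m :=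
          Function.update_of_ne (by omega) _ _
        rw [hupdm]
        exact hloc m fh.1 _ hag _ (fh.2 m h)
      · subst h
        rw [Function.update_self]
        exact hloc m fh.1 _ hag _ (hstep m fh.1 fh.2).choose_spec⟩
  let G : ∀ n, T n := fun n =>
    Nat.rec ⟨fun _ => default, fun m hm => absurd hm (Nat.not_lt_zero m)⟩ step n
  have hGsucc : ∀ n, (G (n+1)).1 =
      Function.update (G n).1 n (hstep n (G n).1 (G n).2).choose := fun n => rfl
  set F : ℕ → D := fun m => (G (m+1)).1 m with hF
  have key : ∀ n, ∀ m < n, (G n).1 m = F m := by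
    intro n
    induction n with
    | zero => intro m hm; omega
    | succ n ih =>
        intro m hm
        rcases Nat.lt_succ_iff_lt_or_eq.1 hm with h | h
        · have : (G (n+1)).1 m = (G n).1 m := by
            rw [hGsucc n]
            exact Function.update_of_ne (by omega) _ _
          rw [this]
          exact ih m h
        · subst h
          rfl
  refine ⟨F, fun n => ?_⟩
  have h1 : P n (G (n+1)).1 ((G (n+1)).1 n) := (G (n+1)).2 n (Nat.lt_succ_self n)
  have h2 : P n (G (n+1)).1 (F n) := h1
  exact hloc n _ F (fun m hm => key (n+1) m (by omega)) _ h2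

end Seq

section Arith

lemma exists_pos_forall_le {ι : Type*} (Q : Finset ι) (v : ι → ℝ) (hv : ∀ x ∈ Q, 0 < v x) :
    ∃ δ : ℝ, 0 < δ ∧ ∀ x ∈ Q, δ ≤ v x := by
  classical
  induction Q using Finset.induction_on with
  | empty => exact ⟨1, one_pos, fun x hx => absurd hx (Finset.notMem_empty x)⟩
  | insert _ _ hnot ih =>
      rename_i a s
      obtain ⟨δ, hδ, hle⟩ := ih fun x hx => hv x (Finset.mem_insert_of_mem hx)
      refine ⟨min δ (v a), lt_min hδ (hv a (Finset.mem_insert_self a s)), ?_⟩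
      intro x hx
      rcases Finset.mem_insert.1 hx with rfl | hx
      · exact min_le_right _ _
      · exact le_trans (min_le_left _ _) (hle x hx)

lemma sum_pow_half_le_two (β : Finset ℕ) : ∑ t ∈ β, ((1:ℝ)/2) ^ t ≤ 2 := by
  have hsub : β ⊆ Finset.range (β.sup id + 1) := fun t ht =>
    Finset.mem_range.2 (Nat.lt_succ_of_le (Finset.le_sup (f := id) ht))
  calc ∑ t ∈ β, ((1:ℝ)/2) ^ t ≤ ∑ t ∈ Finset.range (β.sup id + 1), ((1:ℝ)/2) ^ t :=
        Finset.sum_le_sum_of_subset_of_nonneg hsub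
          (fun t _ _ => le_of_lt (pow_pos (by norm_num) t))
    _ ≤ 2 := sum_geometric_two_le _

lemma sum_pow_half_shift_le_one {N : ℕ} {β : Finset ℕ} (h : ∀ t ∈ β, N < t) :
    ∑ t ∈ β, ((1:ℝ)/2) ^ (t - N) ≤ 1 := by
  classical
  have hinj : ∀ x ∈ β, ∀ y ∈ β, x - N = y - N → x = y := by
    intro x hx y hy hxy
    have := h x hx; have := h y hy
    omega
  have h1 : ∑ t ∈ β, ((1:ℝ)/2) ^ (t - N)
      = ∑ u ∈ β.image (fun t => t - N), ((1:ℝ)/2) ^ u := by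
    rw [Finset.sum_image hinj]
  have hsub : β.image (fun t => t - N) ⊆
      Finset.Icc 1 ((β.image (fun t => t - N)).sup id) := by
    intro u hu
    obtain ⟨t, ht, rfl⟩ := Finset.mem_image.1 hu
    exact Finset.mem_Icc.2 ⟨by have := h t ht; omega, Finset.le_sup (f := id) hu⟩
  set M := (β.image (fun t => t - N)).sup id with hM
  have h2 : ∑ u ∈ β.image (fun t => t - N), ((1:ℝ)/2) ^ u
      ≤ ∑ u ∈ Finset.Icc 1 M, ((1:ℝ)/2) ^ u :=
    Finset.sum_le_sum_of_subset_of_nonneg hsub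
      (fun t _ _ => le_of_lt (pow_pos (by norm_num) t))
  have h3 : ∑ u ∈ Finset.Icc 1 M, ((1:ℝ)/2) ^ u
      = ∑ u ∈ Finset.range (M + 1), ((1:ℝ)/2) ^ u - 1 := by
    have : Finset.range (M + 1) = insert 0 (Finset.Icc 1 M) := by
      ext u
      simp only [Finset.mem_range, Finset.mem_insert, Finset.mem_Icc]
      omega
    rw [this, Finset.sum_insert (by simp)]
    simp
  have h4 : ∑ u ∈ Finset.range (M + 1), ((1:ℝ)/2) ^ u ≤ 2 := sum_geometric_two_le _
  rw [h1]
  linarith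

end Arith

end MCST

namespace MCST

attribute [local instance] Ultrafilter.add Ultrafilter.addSemigroup

section Constr

variable {r : ℕ}

def wOf (y : ℕ → ℕ → ℝ) (f : ℕ → ℝ × Finset ℕ × ℝ) (l t : ℕ) : ℝ :=
  (f t).1 + ∑ s ∈ (f t).2.1, y l s

def zsumOf (y : ℕ → ℕ → ℝ) (f : ℕ → ℝ × Finset ℕ × ℝ) (h : ℕ → ℕ) (β : Finset ℕ) : ℝ :=
  ∑ t ∈ β, wOf y f (h t) t

def zlistOf (y : ℕ → ℕ → ℝ) (f : ℕ → ℝ × Finset ℕ × ℝ) (h : ℕ → ℕ)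
    (c : List (Finset ℕ)) : List ℝ := c.map (zsumOf y f h)

def OrderedChain (L : List (Finset ℕ)) (N : ℕ) : Prop :=
  (∀ b ∈ L, b.Nonempty) ∧ (∀ b ∈ L, ∀ t ∈ b, t < N) ∧
    L.Pairwise (fun b b' => ∀ s ∈ b, ∀ t ∈ b', s < t)

def BsetOf (p : Ultrafilter ℝ) (A : Fin r → Set (Finset ℝ)) (i₀ : Fin r) (k : ℕ)
    (v : List ℝ) : Set ℝ :=
  {x | colTower p A i₀ (k - v.length - 1) (v ++ [x]) = colTower p A i₀ (k - v.length) v}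

lemma BsetOf_mem (p : Ultrafilter ℝ) (A : Fin r → Set (Finset ℝ)) (i₀ : Fin r) {k : ℕ}
    {v : List ℝ} (hv : v.length < k) : BsetOf p A i₀ k v ∈ p := by
  obtain ⟨d, hd⟩ : ∃ d, k - v.length = d + 1 := ⟨k - v.length - 1, by omega⟩
  have hd' : k - v.length - 1 = d := by omega
  simp only [BsetOf, hd, hd']
  exact colTower_succ_mem p A i₀ d v

lemma zsumOf_congr {y : ℕ → ℕ → ℝ} {f g : ℕ → ℝ × Finset ℕ × ℝ} {h h' : ℕ → ℕ}
    {β : Finset ℕ} (hfg : ∀ t ∈ β, f t = g t) (hhh : ∀ t ∈ β, h t = h' t) :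
    zsumOf y f h β = zsumOf y g h' β :=
  Finset.sum_congr rfl fun t ht => by rw [wOf, wOf, hfg t ht, hhh t ht]

lemma zlistOf_congr {y : ℕ → ℕ → ℝ} {f g : ℕ → ℝ × Finset ℕ × ℝ} {h h' : ℕ → ℕ}
    {c : List (Finset ℕ)} (hfg : ∀ b ∈ c, ∀ t ∈ b, f t = g t)
    (hhh : ∀ b ∈ c, ∀ t ∈ b, h t = h' t) :
    zlistOf y f h c = zlistOf y g h' c :=
  List.map_congr_left fun b hb => zsumOf_congr (hfg b hb) (hhh b hb)

/-- The step predicate for the recursive construction. -/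
def StepP (S : Set ℝ) (ε : ℝ) (y : ℕ → ℕ → ℝ) (p : Ultrafilter ℝ)
    (A : Fin r → Set (Finset ℝ)) (i₀ : Fin r) (k : ℕ)
    (n : ℕ) (f : ℕ → ℝ × Finset ℕ × ℝ) (d : ℝ × Finset ℕ × ℝ) : Prop :=
  d.1 ∈ S ∧ d.2.1.Nonempty ∧
  (∀ m < n, ∀ s ∈ (f m).2.1, ∀ t ∈ d.2.1, s < t) ∧
  0 < d.2.2 ∧ d.2.2 ≤ ε / 2 ^ (n + 2) ∧
  (∀ m < n, ∀ l ≤ m, d.2.2 ≤ wOf y f l m / 2 ^ (n - m)) ∧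
  (∀ l ≤ n, d.1 + ∑ s ∈ d.2.1, y l s < d.2.2) ∧
  (∀ (c : List (Finset ℕ)) (γ : Finset ℕ) (h : ℕ → ℕ), (∀ t, h t ≤ t) → c.length < k →
    OrderedChain (c ++ [γ]) (n + 1) →
    zsumOf y (Function.update f n d) h γ ∈
      starS p (BsetOf p A i₀ k (zlistOf y (Function.update f n d) h c)))

lemma StepP_local {S : Set ℝ} {ε : ℝ} {y : ℕ → ℕ → ℝ} {p : Ultrafilter ℝ}
    {A : Fin r → Set (Finset ℝ)} {i₀ : Fin r} {k : ℕ} :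
    ∀ (n : ℕ) (f g : ℕ → ℝ × Finset ℕ × ℝ), (∀ m < n, f m = g m) →
      ∀ d, StepP S ε y p A i₀ k n f d → StepP S ε y p A i₀ k n g d := by
  intro n f g hfg d hP
  obtain ⟨h1, h2, h3, h4, h5, h6, h7, h8⟩ := hP
  refine ⟨h1, h2, ?_, h4, h5, ?_, h7, ?_⟩
  · intro m hm
    rw [← hfg m hm]
    exact h3 m hm
  · intro m hm l hl
    have hw := h6 m hm l hl
    have : wOf y f l m = wOf y g l m := by rw [wOf, wOf, hfg m hm]
    rwa [this] at hw
  · intro c γ h hh hlen hOC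
    have hup : ∀ t, t ≤ n → Function.update f n d t = Function.update g n d t := by
      intro t ht
      rcases eq_or_lt_of_le ht with rfl | hlt
      · simp
      · rw [Function.update_of_ne (by omega), Function.update_of_ne (by omega)]
        exact hfg t hlt
    have h8' := h8 c γ h hh hlen hOC
    have hγ : ∀ t ∈ γ, t ≤ n := fun t ht => by
      have := hOC.2.1 γ (by simp) t ht; omega
    have hc : ∀ b ∈ c, ∀ t ∈ b, t ≤ n := fun b hb t ht => by
      have := hOC.2.1 b (by simp [hb]) t ht; omega
    rwa [zsumOf_congr (fun t ht => hup t (hγ t ht)) (fun _ _ => rfl),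
      zlistOf_congr (fun b hb t ht => hup t (hc b hb t ht)) (fun _ _ _ _ => rfl)] at h8'

lemma attachFin_image_val {n : ℕ} (s : Finset ℕ) (hs : ∀ m ∈ s, m < n) :
    (s.attachFin hs).image Fin.val = s := by
  ext u
  simp only [Finset.mem_image]
  constructor
  · rintro ⟨v, hv, rfl⟩
    exact (Finset.mem_attachFin hs).1 hv
  · intro hu
    exact ⟨⟨u, hs u hu⟩, (Finset.mem_attachFin hs).2 hu, rfl⟩

/-- Finite index type for the constraints at step `n`. -/
abbrev IdxT (k n : ℕ) :=
  (Σ j : Fin k, (Fin (j : ℕ) → Finset (Fin n))) × Finset (Fin n) × (Fin n → Fin n)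

def decSet {n : ℕ} (s : Finset (Fin n)) : Finset ℕ := s.image Fin.val

def decLab {n : ℕ} (h : Fin n → Fin n) : ℕ → ℕ :=
  fun t => if ht : t < n then (h ⟨t, ht⟩ : Fin n).1 else t

def decChain {k n : ℕ} (cj : Σ j : Fin k, (Fin (j : ℕ) → Finset (Fin n))) :
    List (Finset ℕ) := (List.ofFn cj.2).map decSet

def IdxValid {k n : ℕ} (ι : IdxT k n) : Prop :=
  (∀ i : Fin n, ((ι.2.2 i : Fin n) : ℕ) ≤ (i : ℕ)) ∧ (∀ b ∈ decChain ι.1, b.Nonempty) ∧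
    (decChain ι.1 ++ [decSet ι.2.1]).Pairwise (fun b b' => ∀ s ∈ b, ∀ t ∈ b', s < t)

def targetSet (y : ℕ → ℕ → ℝ) (p : Ultrafilter ℝ) (A : Fin r → Set (Finset ℝ))
    (i₀ : Fin r) (k : ℕ) (f : ℕ → ℝ × Finset ℕ × ℝ) {n : ℕ} (ι : IdxT k n) : Set ℝ :=
  {x | zsumOf y f (decLab ι.2.2) (decSet ι.2.1) + x ∈
    starS p (BsetOf p A i₀ k (zlistOf y f (decLab ι.2.2) (decChain ι.1)))}

lemma decSet_attachFin {n : ℕ} (s : Finset ℕ) (hs : ∀ m ∈ s, m < n) :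
    decSet (s.attachFin hs) = s := attachFin_image_val s hs

lemma decLab_encode {n : ℕ} (h : ℕ → ℕ) (hh : ∀ t, h t ≤ t) {t : ℕ} (ht : t < n) :
    decLab (fun i : Fin n => (⟨h (i : ℕ), lt_of_le_of_lt (hh (i : ℕ)) i.2⟩ : Fin n)) t
      = h t := by
  unfold decLab
  rw [dif_pos ht]

lemma decChain_encode {k n : ℕ} (c : List (Finset ℕ)) (hlen : c.length < k)
    (hc : ∀ (i : Fin c.length), ∀ t ∈ c.get i, t < n) :
    decChain (⟨⟨c.length, hlen⟩, fun i => (c.get i).attachFin (hc i)⟩ :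
      Σ j : Fin k, (Fin (j : ℕ) → Finset (Fin n))) = c := by
  unfold decChain
  rw [List.map_ofFn]
  have heq : (decSet ∘ fun i => (c.get i).attachFin (hc i)) = fun i => c.get i :=
    funext fun i => decSet_attachFin _ _
  rw [heq]
  exact List.ofFn_get c

end Constr

end MCST

namespace MCST

attribute [local instance] Ultrafilter.add Ultrafilter.addSemigroup

section StepEx

variable {S : Set ℝ} {y : ℕ → ℕ → ℝ} {p : Ultrafilter ℝ} {r : ℕ}

lemma decLab_eq {n : ℕ} (hf : Fin n → Fin n) (h : ℕ → ℕ)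
    (hagree : ∀ i : Fin n, ((hf i : Fin n) : ℕ) = h (i : ℕ)) {t : ℕ} (ht : t < n) :
    decLab hf t = h t := by
  unfold decLab
  rw [dif_pos ht]
  exact hagree ⟨t, ht⟩

lemma step_exists (hSpos : ∀ x ∈ S, 0 < x) (hSadd : ∀ x ∈ S, ∀ y ∈ S, x + y ∈ S)
    (hSdense : ∀ a b : ℝ, 0 ≤ a → a < b → ∃ s ∈ S, s ∈ Set.Ioo a b)
    (hy : ∀ l n, y l n ∈ S)
    (hY : ∀ l : ℕ, ∀ δ : ℝ, 0 < δ → ∃ mm : ℕ, ∀ H : Finset ℕ, H.Nonempty →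
      (∀ t ∈ H, mm ≤ t) → ∑ t ∈ H, y l t < δ)
    (hp : IsMinimalIdempotentNearZero S p)
    (A : Fin r → Set (Finset ℝ)) (i₀ : Fin r) (k : ℕ) {ε : ℝ} (hε : 0 < ε)
    (n : ℕ) (f : ℕ → ℝ × Finset ℕ × ℝ)
    (hinv : ∀ m < n, StepP S ε y p A i₀ k m f (f m)) :
    ∃ d, StepP S ε y p A i₀ k n f d := by
  classical
  have hpZ := hp.1
  have hpp := hp.2.1
  have hwpos : ∀ m < n, ∀ l : ℕ, 0 < wOf y f l m := by
    intro m hm l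
    have h1 := (hinv m hm).1
    have h2 := (hinv m hm).2.1
    have hs : (0:ℝ) < ∑ s ∈ (f m).2.1, y l s :=
      Finset.sum_pos (fun s _ => hSpos _ (hy l s)) h2
    have h3 := hSpos _ h1
    simp only [wOf]
    linarith
  set Q : Finset (ℕ × ℕ) := (Finset.range n ×ˢ Finset.range n).filter
    (fun ml => ml.2 ≤ ml.1) with hQ
  obtain ⟨δ₁, hδ₁pos, hδ₁le⟩ := exists_pos_forall_le Q
    (fun ml => wOf y f ml.2 ml.1 / 2 ^ (n - ml.1))
    (by
      intro ml hml
      rw [hQ, Finset.mem_filter, Finset.mem_product] at hml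
      exact div_pos (hwpos ml.1 (Finset.mem_range.1 hml.1.1) ml.2) (by positivity))
  set δ : ℝ := min (ε / 2 ^ (n + 2)) δ₁ with hδdef
  have hδpos : 0 < δ := lt_min (by positivity) hδ₁pos
  have hlenc : ∀ cj : Σ j : Fin k, (Fin (j : ℕ) → Finset (Fin n)),
      (decChain cj).length < k := by
    intro cj
    simp only [decChain, List.length_map, List.length_ofFn]
    exact cj.1.2
  have htarget : ∀ ι : IdxT k n, IdxValid ι → targetSet y p A i₀ k f ι ∈ p := by
    intro ι hval
    have hzlen : (zlistOf y f (decLab ι.2.2) (decChain ι.1)).length < k := by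
      simp only [zlistOf, List.length_map]
      exact hlenc ι.1
    rcases Finset.eq_empty_or_nonempty (decSet ι.2.1) with hem | hne
    · refine Filter.mem_of_superset (starS_mem hpp (BsetOf_mem p A i₀ hzlen)) ?_
      intro x hx
      simp only [targetSet, Set.mem_setOf_eq]
      rw [hem]
      simpa [zsumOf] using hx
    · have hγlt : ∀ t ∈ decSet ι.2.1, t < n := by
        intro t ht
        obtain ⟨v, hv, rfl⟩ := Finset.mem_image.1 ht
        exact v.2
      have hNmem : (decSet ι.2.1).max' hne ∈ decSet ι.2.1 := Finset.max'_mem _ hne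
      have hNn : (decSet ι.2.1).max' hne < n := hγlt _ hNmem
      have hOC : OrderedChain (decChain ι.1 ++ [decSet ι.2.1])
          ((decSet ι.2.1).max' hne + 1) := by
        refine ⟨?_, ?_, hval.2.2⟩
        · intro b hb
          rcases List.mem_append.1 hb with h | h
          · exact hval.2.1 b h
          · rw [List.mem_singleton.1 h]
            exact hne
        · intro b hb t ht
          rcases List.mem_append.1 hb with h | h
          · have hrel := (List.pairwise_append.1 hval.2.2).2.2 b h (decSet ι.2.1)
              (List.mem_singleton_self _)
            have := hrel t ht _ hNmem
            omega
          · rw [List.mem_singleton.1 h] at ht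
            have := Finset.le_max' _ t ht
            omega
      have hlab : ∀ t, decLab ι.2.2 t ≤ t := by
        intro t
        unfold decLab
        split
        · exact hval.1 ⟨t, by assumption⟩
        · exact le_rfl
      have hinst := (hinv _ hNn).2.2.2.2.2.2.2 (decChain ι.1) (decSet ι.2.1)
        (decLab ι.2.2) hlab (hlenc ι.1) hOC
      rw [Function.update_eq_self] at hinst
      exact starS_shift hpp hinst
  set X : Set ℝ := {x | x ∈ S ∧ x < δ} ∩ ⋂ ι : IdxT k n,
    (if IdxValid ι then targetSet y p A i₀ k f ι else Set.univ) with hXdef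
  have hXp : X ∈ p := by
    refine Filter.inter_mem (hpZ δ hδpos) (Filter.iInter_mem.2 fun ι => ?_)
    by_cases h : IdxValid ι
    · rw [if_pos h]
      exact htarget ι h
    · rw [if_neg h]
      exact Filter.univ_mem
  obtain ⟨a, haS, α, hαne, hαge, hmem⟩ := keyLemma hSpos hSadd hSdense hy hY hp n X hXp
    (((Finset.range n).biUnion (fun m => (f m).2.1)).sup id + 1)
  refine ⟨(a, α, δ), haS, hαne, ?_, hδpos, min_le_left _ _, ?_, ?_, ?_⟩
  · intro m hm s hs t ht
    have hsle : s ≤ ((Finset.range n).biUnion (fun m => (f m).2.1)).sup id :=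
      Finset.le_sup (f := id) (Finset.mem_biUnion.2 ⟨m, Finset.mem_range.2 hm, hs⟩)
    have := hαge t ht
    omega
  · intro m hm l hl
    have hQm : (m, l) ∈ Q := by
      rw [hQ]
      exact Finset.mem_filter.2 ⟨Finset.mem_product.2
        ⟨Finset.mem_range.2 hm, Finset.mem_range.2 (lt_of_le_of_lt hl hm)⟩, hl⟩
    exact le_trans (min_le_right _ _) (hδ₁le (m, l) hQm)
  · intro l hl
    exact (hmem l hl).1.2
  · intro c γ h hh hlen hOC
    have hγbound : ∀ t ∈ γ, t ≤ n := fun t ht => by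
      have := hOC.2.1 γ (by simp) t ht
      omega
    have hγne : γ.Nonempty := hOC.1 γ (by simp)
    have hpairs := (List.pairwise_append.1 hOC.2.2).2.2
    have hfe1 : ∀ t, t < n → Function.update f n (a,α,δ) t = f t := fun t ht =>
      Function.update_of_ne (by omega) _ _
    by_cases hnγ : n ∈ γ
    · have hcb' : ∀ b ∈ c, ∀ t ∈ b, t < n := by
        intro b hb t ht
        exact hpairs b hb γ (List.mem_singleton_self γ) t ht n hnγ
      have hγ'lt : ∀ t ∈ γ.erase n, t < n := by
        intro t ht
        have h1 := Finset.mem_of_mem_erase ht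
        have h2 := Finset.ne_of_mem_erase ht
        have := hγbound t h1
        omega
      have hclt : ∀ (i : Fin c.length), ∀ t ∈ c.get i, t < n :=
        fun i t ht => hcb' _ (List.get_mem c i) t ht
      set ι : IdxT k n :=
        ⟨⟨⟨c.length, hlen⟩, fun i => (c.get i).attachFin (hclt i)⟩,
          (γ.erase n).attachFin hγ'lt,
          fun i => (⟨h (i : ℕ), lt_of_le_of_lt (hh (i : ℕ)) i.2⟩ : Fin n)⟩ with hι
      have hdc : decChain ι.1 = c := decChain_encode c hlen hclt
      have hds : decSet ι.2.1 = γ.erase n := decSet_attachFin _ _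
      have hval : IdxValid ι := by
        refine ⟨fun i => hh _, ?_, ?_⟩
        · rw [hdc]
          intro b hb
          exact hOC.1 b (by simp [hb])
        · rw [hdc, hds]
          rw [List.pairwise_append]
          refine ⟨(List.pairwise_append.1 hOC.2.2).1, List.pairwise_singleton _ _, ?_⟩
          intro b hb g hg
          rw [List.mem_singleton.1 hg]
          intro s hs t ht
          exact hpairs b hb γ (List.mem_singleton_self γ) s hs t (Finset.mem_of_mem_erase ht)
      have hxι := Set.mem_iInter.1 ((hmem (h n) (hh n)).2) ι
      rw [if_pos hval] at hxι
      simp only [targetSet, Set.mem_setOf_eq] at hxι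
      have hzs : zsumOf y f (decLab ι.2.2) (decSet ι.2.1) = zsumOf y f h (γ.erase n) := by
        rw [hds]
        exact zsumOf_congr (fun _ _ => rfl)
          (fun t ht => decLab_eq _ _ (fun i => rfl) (hγ'lt t ht))
      have hzl : zlistOf y f (decLab ι.2.2) (decChain ι.1) = zlistOf y f h c := by
        rw [hdc]
        exact zlistOf_congr (fun _ _ _ _ => rfl)
          (fun b hb t ht => decLab_eq _ _ (fun i => rfl) (hcb' b hb t ht))
      rw [hzs, hzl] at hxι
      have hgoalz : zsumOf y (Function.update f n (a,α,δ)) h γ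
          = zsumOf y f h (γ.erase n) + (a + ∑ s ∈ α, y (h n) s) := by
        have hsum := Finset.sum_erase_add γ
          (fun t => wOf y (Function.update f n (a,α,δ)) (h t) t) hnγ
        simp only [zsumOf]
        rw [← hsum]
        congr 1
        · refine Finset.sum_congr rfl fun t ht => ?_
          simp only [wOf]
          rw [hfe1 t (hγ'lt t ht)]
        · simp only [wOf, Function.update_self]
      have hgoall : zlistOf y (Function.update f n (a,α,δ)) h c = zlistOf y f h c :=
        zlistOf_congr (fun b hb t ht => hfe1 t (hcb' b hb t ht)) (fun _ _ _ _ => rfl)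
      rw [hgoalz, hgoall]
      exact hxι
    · have hγlt : ∀ t ∈ γ, t < n := fun t ht =>
        lt_of_le_of_ne (hγbound t ht) (fun he => hnγ (he ▸ ht))
      have hNn : γ.max' hγne < n := hγlt _ (γ.max'_mem hγne)
      have hOC' : OrderedChain (c ++ [γ]) (γ.max' hγne + 1) := by
        refine ⟨hOC.1, ?_, hOC.2.2⟩
        intro b hb t ht
        rcases List.mem_append.1 hb with hbc | hbg
        · have := hpairs b hbc γ (List.mem_singleton_self γ) t ht _ (γ.max'_mem hγne)
          omega
        · rw [List.mem_singleton.1 hbg] at ht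
          have := Finset.le_max' γ t ht
          omega
      have hinst := (hinv _ hNn).2.2.2.2.2.2.2 c γ h hh hlen hOC'
      rw [Function.update_eq_self] at hinst
      have hcblt : ∀ b ∈ c, ∀ t ∈ b, t < n := by
        intro b hb t ht
        have := hpairs b hb γ (List.mem_singleton_self γ) t ht _ (γ.max'_mem hγne)
        omega
      have hz : zsumOf y (Function.update f n (a,α,δ)) h γ = zsumOf y f h γ :=
        zsumOf_congr (fun t ht => hfe1 t (hγlt t ht)) (fun _ _ => rfl)
      have hl : zlistOf y (Function.update f n (a,α,δ)) h c = zlistOf y f h c :=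
        zlistOf_congr (fun b hb t ht => hfe1 t (hcblt b hb t ht)) (fun _ _ _ _ => rfl)
      rw [hz, hl]
      exact hinst

end StepEx

end MCST

attribute [local instance] Ultrafilter.addSemigroup

/-- The Multidimensional Central Sets Theorem near zero: main result of the paper. -/
theorem multidimensional_central_sets_theorem_near_zero (S : Set ℝ)
    (hSpos : ∀ x ∈ S, 0 < x)
    (hSadd : ∀ x ∈ S, ∀ y ∈ S, x + y ∈ S)
    (hSdense : ∀ a b : ℝ, 0 ≤ a → a < b → ∃ s ∈ S, s ∈ Set.Ioo a b)
    (p : Ultrafilter ℝ) (hp : IsMinimalIdempotentNearZero S p)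
    (hnonprincipal : ∀ x : ℝ, p ≠ pure x)
    (ε : ℝ) (hε : 0 < ε) (k r : ℕ) (hk : 1 ≤ k) (hr : 1 ≤ r)
    (A : Fin r → Set (Finset ℝ))
    (hcover : ∀ E : Finset ℝ, E.card = k → (∀ x ∈ E, x ∈ S ∧ x < ε) → ∃ i, E ∈ A i)
    (y : ℕ → ℕ → ℝ) (hy : ∀ l n, y l n ∈ S)
    (hY : ∀ l : ℕ, ∀ δ : ℝ, 0 < δ → ∃ m : ℕ, ∀ H : Finset ℕ, H.Nonempty →
      (∀ t ∈ H, m ≤ t) → ∑ t ∈ H, y l t < δ) :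
    ∃ i : Fin r, ∃ a : ℕ → ℝ, ∃ α : ℕ → Finset ℕ,
      (∀ n, a n ∈ S) ∧
      Filter.Tendsto a Filter.atTop (nhds 0) ∧
      (∀ n, (α n).Nonempty) ∧
      (∀ n, ∀ s ∈ α n, ∀ t ∈ α (n + 1), s < t) ∧
      (∀ g : ℕ → ℕ, (∀ n, g n ≤ n) →
        ∀ β : Fin k → Finset ℕ,
          (∀ j, (β j).Nonempty) →
          (∀ j₁ j₂ : Fin k, j₁ < j₂ → ∀ s ∈ β j₁, ∀ t ∈ β j₂, s < t) →
          Finset.image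
            (fun j => ∑ n ∈ β j, (a n + ∑ t ∈ α n, y (g n) t)) Finset.univ ∈ A i) := by
  classical
  set i₀ : Fin r := ⟨0, hr⟩ with hi₀
  obtain ⟨F, hF⟩ := MCST.seq_construction (MCST.StepP S ε y p A i₀ k)
    (fun n f g hfg d hd => MCST.StepP_local n f g hfg d hd)
    (fun n f hin => MCST.step_exists hSpos hSadd hSdense hy hY hp A i₀ k hε n f hin)
  have hFS : ∀ n, (F n).1 ∈ S := fun n => (hF n).1
  have hFne : ∀ n, (F n).2.1.Nonempty := fun n => (hF n).2.1
  have hFord : ∀ n, ∀ m < n, ∀ s ∈ (F m).2.1, ∀ t ∈ (F n).2.1, s < t :=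
    fun n => (hF n).2.2.1
  have hFδpos : ∀ n, 0 < (F n).2.2 := fun n => (hF n).2.2.2.1
  have hFδε : ∀ n, (F n).2.2 ≤ ε / 2 ^ (n + 2) := fun n => (hF n).2.2.2.2.1
  have hFδw : ∀ n, ∀ m < n, ∀ l ≤ m, (F n).2.2 ≤ MCST.wOf y F l m / 2 ^ (n - m) :=
    fun n => (hF n).2.2.2.2.2.1
  have hFwδ : ∀ n, ∀ l ≤ n, (F n).1 + ∑ s ∈ (F n).2.1, y l s < (F n).2.2 :=
    fun n => (hF n).2.2.2.2.2.2.1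
  have hFinv := fun n => (hF n).2.2.2.2.2.2.2
  have hwpos : ∀ (t l : ℕ), 0 < MCST.wOf y F l t := by
    intro t l
    have h1 := hSpos _ (hFS t)
    have h2 : (0:ℝ) < ∑ s ∈ (F t).2.1, y l s :=
      Finset.sum_pos (fun s _ => hSpos _ (hy l s)) (hFne t)
    simp only [MCST.wOf]
    linarith
  have hwlt : ∀ t, ∀ l ≤ t, MCST.wOf y F l t < (F t).2.2 := by
    intro t l hl
    simpa only [MCST.wOf] using hFwδ t l hl
  refine ⟨MCST.colTower p A i₀ k [], fun n => (F n).1, fun n => (F n).2.1,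
    fun n => hFS n, ?_, fun n => hFne n, ?_, ?_⟩
  · -- Tendsto
    have h2' : ∀ n, (F n).1 ≤ ε * (1/2) ^ n := by
      intro n
      have hsum : (0:ℝ) < ∑ s ∈ (F n).2.1, y 0 s :=
        Finset.sum_pos (fun s _ => hSpos _ (hy 0 s)) (hFne n)
      have hlt := hFwδ n 0 (Nat.zero_le n)
      have hδ := hFδε n
      have hpow : ε / 2 ^ (n + 2) ≤ ε * (1/2) ^ n := by
        rw [div_pow, one_pow, mul_one_div]
        exact div_le_div_of_nonneg_left hε.le (by positivity)
          (pow_le_pow_right₀ (by norm_num) (by omega))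
      linarith
    have hg0 : Filter.Tendsto (fun n : ℕ => ε * (1/2) ^ n) Filter.atTop (nhds 0) := by
      have := tendsto_pow_atTop_nhds_zero_of_lt_one
        (by norm_num : (0:ℝ) ≤ 1/2) (by norm_num : (1/2:ℝ) < 1)
      simpa using this.const_mul ε
    exact squeeze_zero (fun n => (hSpos _ (hFS n)).le) h2' hg0
  · -- ordering of the α's
    intro n s hs t ht
    exact hFord (n+1) n (Nat.lt_succ_self n) s hs t ht
  · -- main statement
    intro g hg β hβne hβord
    set B : ℕ → Finset ℕ := fun t => if ht : t < k then β ⟨t, ht⟩ else ∅ with hBdef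
    have hB : ∀ (j : ℕ) (hj : j < k), B j = β ⟨j, hj⟩ := fun j hj => dif_pos hj
    set cL : ℕ → List (Finset ℕ) := fun j => (List.range j).map B with hcL
    have hzlen : ∀ j, (MCST.zlistOf y F g (cL j)).length = j := by
      intro j
      simp [MCST.zlistOf, hcL]
    -- the decrease lemma
    have hdec : ∀ (N : ℕ) (γ2 : Finset ℕ), γ2.Nonempty → (∀ t ∈ γ2, N < t) →
        ∀ l ≤ N, MCST.zsumOf y F g γ2 < MCST.wOf y F l N := by
      intro N γ2 hne hgt l hl
      have step1 : MCST.zsumOf y F g γ2 < ∑ t ∈ γ2, (F t).2.2 := by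
        simp only [MCST.zsumOf]
        exact Finset.sum_lt_sum_of_nonempty hne fun t ht => hwlt t (g t) (hg t)
      have step2 : ∑ t ∈ γ2, (F t).2.2
          ≤ ∑ t ∈ γ2, MCST.wOf y F l N * (1/2) ^ (t - N) := by
        refine Finset.sum_le_sum fun t ht => ?_
        have h6 := hFδw t N (hgt t ht) l hl
        have hpow : MCST.wOf y F l N / 2 ^ (t - N)
            = MCST.wOf y F l N * (1/2) ^ (t - N) := by
          rw [div_pow, one_pow, mul_one_div]
        rw [hpow] at h6
        exact h6
      have step3 : ∑ t ∈ γ2, MCST.wOf y F l N * (1/2) ^ (t - N)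
          = MCST.wOf y F l N * ∑ t ∈ γ2, ((1:ℝ)/2) ^ (t - N) := by
        rw [Finset.mul_sum]
      have step4 : MCST.wOf y F l N * ∑ t ∈ γ2, ((1:ℝ)/2) ^ (t - N)
          ≤ MCST.wOf y F l N * 1 :=
        mul_le_mul_of_nonneg_left (MCST.sum_pow_half_shift_le_one hgt) (hwpos N l).le
      have := hwpos N l
      calc MCST.zsumOf y F g γ2 < ∑ t ∈ γ2, (F t).2.2 := step1
        _ ≤ _ := step2
        _ = _ := step3
        _ ≤ MCST.wOf y F l N * 1 := step4
        _ = MCST.wOf y F l N := mul_one _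
    -- strict decrease along the blocks
    have hstrict : ∀ u v : Fin k, u < v →
        MCST.zsumOf y F g (β v) < MCST.zsumOf y F g (β u) := by
      intro u v huv
      have hNmem := (β u).max'_mem (hβne u)
      have hgt : ∀ t ∈ β v, (β u).max' (hβne u) < t :=
        fun t ht => hβord u v huv _ hNmem t ht
      have h1 := hdec ((β u).max' (hβne u)) (β v) (hβne v) hgt
        (g ((β u).max' (hβne u))) (hg _)
      have h2 : MCST.wOf y F (g ((β u).max' (hβne u))) ((β u).max' (hβne u))
          ≤ MCST.zsumOf y F g (β u) := by
        simp only [MCST.zsumOf]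
        exact Finset.single_le_sum (f := fun t => MCST.wOf y F (g t) t)
          (fun t _ => (hwpos t _).le) hNmem
      linarith
    -- membership and bound
    have hzS : ∀ jj : Fin k, MCST.zsumOf y F g (β jj) ∈ S := by
      intro jj
      simp only [MCST.zsumOf]
      refine MCST.sum_mem_S hSadd (hβne jj) fun t _ => ?_
      simp only [MCST.wOf]
      exact hSadd _ (hFS t) _ (MCST.sum_mem_S hSadd (hFne t) fun s _ => hy _ s)
    have hzub : ∀ jj : Fin k, MCST.zsumOf y F g (β jj) < ε := by
      intro jj
      have step1 : MCST.zsumOf y F g (β jj) < ∑ t ∈ β jj, (F t).2.2 := by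
        simp only [MCST.zsumOf]
        exact Finset.sum_lt_sum_of_nonempty (hβne jj) fun t ht => hwlt t (g t) (hg t)
      have step2 : ∑ t ∈ β jj, (F t).2.2 ≤ ∑ t ∈ β jj, ε/4 * ((1:ℝ)/2) ^ t := by
        refine Finset.sum_le_sum fun t ht => ?_
        have h5 := hFδε t
        have heq : ε / 2 ^ (t + 2) = ε/4 * ((1:ℝ)/2) ^ t := by
          rw [div_pow, one_pow, mul_one_div, div_div]
          congr 1
          rw [pow_add]
          ring
        rw [heq] at h5
        exact h5
      have step3 : ∑ t ∈ β jj, ε/4 * ((1:ℝ)/2) ^ t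
          = ε/4 * ∑ t ∈ β jj, ((1:ℝ)/2) ^ t := by rw [Finset.mul_sum]
      have step4 : ε/4 * ∑ t ∈ β jj, ((1:ℝ)/2) ^ t ≤ ε/4 * 2 :=
        mul_le_mul_of_nonneg_left (MCST.sum_pow_half_le_two (β jj)) (by linarith)
      calc MCST.zsumOf y F g (β jj) < ∑ t ∈ β jj, (F t).2.2 := step1
        _ ≤ _ := step2
        _ = _ := step3
        _ ≤ ε/4 * 2 := step4
        _ < ε := by linarith
    -- the star-invariant instances
    have hstar : ∀ (j : ℕ) (hj : j < k), MCST.zsumOf y F g (B j) ∈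
        MCST.starS p (MCST.BsetOf p A i₀ k (MCST.zlistOf y F g (cL j))) := by
      intro j hj
      have hBne : (B j).Nonempty := by rw [hB j hj]; exact hβne _
      have hNmem : (B j).max' hBne ∈ B j := (B j).max'_mem hBne
      have hNmemβ : (B j).max' hBne ∈ β ⟨j, hj⟩ := by rw [← hB j hj]; exact hNmem
      have hOCj : MCST.OrderedChain (cL j ++ [B j]) ((B j).max' hBne + 1) := by
        refine ⟨?_, ?_, ?_⟩
        · intro b hb
          rcases List.mem_append.1 hb with hbc | hbg
          · obtain ⟨t, htr, rfl⟩ := List.mem_map.1 hbc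
            have htj : t < j := List.mem_range.1 htr
            rw [hB t (by omega)]
            exact hβne _
          · rw [List.mem_singleton.1 hbg]
            exact hBne
        · intro b hb t ht
          rcases List.mem_append.1 hb with hbc | hbg
          · obtain ⟨t', htr, rfl⟩ := List.mem_map.1 hbc
            have ht'j : t' < j := List.mem_range.1 htr
            have htlt : t < (B j).max' hBne := by
              have h1 : B t' = β ⟨t', by omega⟩ := hB t' (by omega)
              rw [h1] at ht
              exact hβord ⟨t', by omega⟩ ⟨j, hj⟩ (by simp [Fin.lt_def]; omega)
                t ht _ hNmemβ
            omega
          · rw [List.mem_singleton.1 hbg] at ht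
            have := Finset.le_max' (B j) t ht
            omega
        · have hform : cL j ++ [B j] = (List.range (j+1)).map B := by
            rw [List.range_succ, List.map_append]
            rfl
          rw [hform, List.pairwise_iff_getElem]
          intro a b ha hb hab
          have haj : a < j + 1 := by simpa using ha
          have hbj : b < j + 1 := by simpa using hb
          simp only [List.getElem_map, List.getElem_range]
          intro s hs t ht
          rw [hB a (by omega)] at hs
          rw [hB b (by omega)] at ht
          exact hβord ⟨a, by omega⟩ ⟨b, by omega⟩ (by simp [Fin.lt_def]; omega) s hs t ht
      have hlenj : (cL j).length < k := by
        simp only [hcL, List.length_map, List.length_range]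
        exact hj
      have h8 := hFinv ((B j).max' hBne) (cL j) (B j) g hg hlenj hOCj
      rwa [Function.update_eq_self] at h8
    -- the color chain
    have hcol : ∀ j, j ≤ k → MCST.colTower p A i₀ (k - j) (MCST.zlistOf y F g (cL j))
        = MCST.colTower p A i₀ k [] := by
      intro j
      induction j with
      | zero =>
          intro _
          have h0 : cL 0 = [] := by simp [hcL]
          rw [h0]
          simp [MCST.zlistOf]
      | succ j ih =>
          intro hjk
          have hj : j < k := by omega
          have hBset := MCST.starS_subset _ (hstar j hj)
          have hlenj : (MCST.zlistOf y F g (cL j)).length = j := hzlen j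
          simp only [MCST.BsetOf, Set.mem_setOf_eq, hlenj] at hBset
          have hsucc : MCST.zlistOf y F g (cL (j+1))
              = MCST.zlistOf y F g (cL j) ++ [MCST.zsumOf y F g (B j)] := by
            simp [hcL, List.range_succ, MCST.zlistOf]
          rw [hsucc]
          have hk1 : k - (j+1) = k - j - 1 := by omega
          rw [hk1, hBset]
          exact ih (by omega)
    -- identify the image finset
    have himg : (MCST.zlistOf y F g (cL k)).toFinset
        = Finset.image (fun jj : Fin k => MCST.zsumOf y F g (β jj)) Finset.univ := by
      ext x
      simp only [List.mem_toFinset, MCST.zlistOf, hcL, List.mem_map, List.mem_range,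
        Finset.mem_image, Finset.mem_univ, true_and]
      constructor
      · rintro ⟨b, ⟨t, ht, rfl⟩, rfl⟩
        exact ⟨⟨t, ht⟩, by rw [hB t ht]⟩
      · rintro ⟨jj, rfl⟩
        exact ⟨B jj.1, ⟨jj.1, jj.2, rfl⟩, by rw [hB jj.1 jj.2]⟩
    have hinj : Function.Injective (fun jj : Fin k => MCST.zsumOf y F g (β jj)) := by
      intro u v huv
      have huv' : MCST.zsumOf y F g (β u) = MCST.zsumOf y F g (β v) := huv
      by_contra hne
      rcases Ne.lt_or_gt hne with h | h
      · have := hstrict u v h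
        rw [huv'] at this
        exact lt_irrefl _ this
      · have := hstrict v u h
        rw [huv'] at this
        exact lt_irrefl _ this
    have hcard : (Finset.image (fun jj : Fin k => MCST.zsumOf y F g (β jj))
        Finset.univ).card = k := by
      rw [Finset.card_image_of_injective _ hinj, Finset.card_univ, Fintype.card_fin]
    have hmemE : ∀ x ∈ Finset.image (fun jj : Fin k => MCST.zsumOf y F g (β jj))
        Finset.univ, x ∈ S ∧ x < ε := by
      intro x hx
      obtain ⟨jj, _, rfl⟩ := Finset.mem_image.1 hx
      exact ⟨hzS jj, hzub jj⟩
    obtain ⟨i', hi'⟩ := hcover _ hcard hmemE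
    have hex : ∃ ii, (MCST.zlistOf y F g (cL k)).toFinset ∈ A ii := by
      rw [himg]
      exact ⟨i', hi'⟩
    have hfin := MCST.colTower_zero p A i₀ _ hex
    rw [himg] at hfin
    have hcolk := hcol k le_rfl
    rw [Nat.sub_self] at hcolk
    rw [hcolk] at hfin
    have hfun : (fun jj : Fin k => ∑ n ∈ β jj, ((F n).1 + ∑ t ∈ (F n).2.1, y (g n) t))
        = fun jj : Fin k => MCST.zsumOf y F g (β jj) := by
      funext jj
      simp [MCST.zsumOf, MCST.wOf]
    rw [hfun]
    exact hfin
end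

section
/- Let (S,+) be a dense subsemigroup of ((0,∞),+), let p be an idempotent ultrafilter in 0⁺, and let A ∈ p. Then there exists a sequence ⟨x_n⟩_{n=1}^∞ in S with x_n < 1/n for all n such that FS(⟨x_n⟩_{n=1}^∞) = {Σ_{n∈F} x_n : F ∈ 𝒫_f(ℕ)} ⊆ A. -/
/-!
Galvin–Glazer argument. If `p + p = p` and `B ∈ p`, then `p`-almost every `x ∈ B` has
`{y | x + y ∈ B} ∈ p`; such an `x` may also be taken in any prescribed member `U n` of `p`, here
`(0, 1/n) ∩ S`. Choosing `x₀, x₁, …` this way along the shrinking sets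
`B₀ = A`, `Bₙ₊₁ = Bₙ ∩ (xₙ + ·)⁻¹' Bₙ` puts every finite sum with least index `n` into `Bₙ ⊆ A`.
-/

attribute [local instance] Ultrafilter.add

open Filter

section Chain

variable {M : Type*} [AddCommMonoid M] {x : ℕ → M} {B : ℕ → Set M}

theorem sum_mem_of_forall_le_of_chain (hx : ∀ n, x n ∈ B n)
    (hB : ∀ n, B (n + 1) ⊆ B n ∩ {y | x n + y ∈ B n}) {F : Finset ℕ} (hF : F.Nonempty) :
    ∀ n, (∀ i ∈ F, n ≤ i) → ∑ i ∈ F, x i ∈ B n := by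
  have hanti : Antitone B := antitone_nat_of_succ_le fun n => (hB n).trans Set.inter_subset_left
  induction F using Finset.induction_on_min with
  | empty => exact absurd hF Finset.not_nonempty_empty
  | insert a F hlt ih =>
    intro n hn
    have ha : n ≤ a := hn a (Finset.mem_insert_self a F)
    rw [Finset.sum_insert fun haF => lt_irrefl a (hlt a haF)]
    refine hanti ha ?_
    rcases F.eq_empty_or_nonempty with rfl | hF'
    · simpa using hx a
    · exact (hB a (ih hF' (a + 1) fun i hi => hlt i hi)).2

end Chain

section Idempotent

variable {M : Type*} [AddSemigroup M] {p : Ultrafilter M}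

theorem setOf_add_mem_mem_of_idempotent (hp : p + p = p) {B : Set M} (hB : B ∈ p) :
    {x | {y | x + y ∈ B} ∈ p} ∈ p := by
  rw [← hp] at hB
  exact hB

theorem exists_chain_of_idempotent (hp : p + p = p) {A : Set M} (hA : A ∈ p)
    {U : ℕ → Set M} (hU : ∀ n, U n ∈ p) :
    ∃ (x : ℕ → M) (B : ℕ → Set M), B 0 = A ∧ (∀ n, x n ∈ U n ∩ B n) ∧
      ∀ n, B (n + 1) = B n ∩ {y | x n + y ∈ B n} := by
  have hpick : ∀ n (C : Set M), C ∈ p → ∃ y ∈ U n ∩ C, {z | y + z ∈ C} ∈ p := fun n C hC =>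
    Ultrafilter.nonempty_of_mem
      (inter_mem (inter_mem (hU n) hC) (setOf_add_mem_mem_of_idempotent hp hC))
  have : Nonempty M := ⟨(Ultrafilter.nonempty_of_mem hA).some⟩
  choose! pick hpick_mem hpick_large using hpick
  let B : ℕ → Set M := fun n => Nat.rec A (fun k C => C ∩ {z | pick k C + z ∈ C}) n
  have hBp : ∀ n, B n ∈ p := by
    intro n
    induction n with
    | zero => exact hA
    | succ k ih => exact inter_mem ih (hpick_large k _ ih)
  exact ⟨fun n => pick n (B n), B, rfl, fun n => hpick_mem n _ (hBp n), fun n => rfl⟩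

end Idempotent

theorem exists_forall_mem_forall_sum_mem {M : Type*} [AddCommMonoid M] {p : Ultrafilter M}
    (hp : p + p = p) {A : Set M} (hA : A ∈ p) {U : ℕ → Set M} (hU : ∀ n, U n ∈ p) :
    ∃ x : ℕ → M, (∀ n, x n ∈ U n) ∧ ∀ F : Finset ℕ, F.Nonempty → ∑ i ∈ F, x i ∈ A := by
  obtain ⟨x, B, hB0, hx, hB⟩ := exists_chain_of_idempotent hp hA hU
  refine ⟨x, fun n => (hx n).1, fun F hF => hB0 ▸ ?_⟩
  exact sum_mem_of_forall_le_of_chain (fun n => (hx n).2) (fun n => (hB n).le) hF 0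
    fun i _ => i.zero_le

theorem finite_sums_near_zero_general (S : Set ℝ)
    (p : Ultrafilter ℝ) (hidem : p + p = p)
    (hzero : ∀ ε : ℝ, 0 < ε → {x | x ∈ S ∧ x < ε} ∈ p)
    (A : Set ℝ) (hA : A ∈ p) :
    ∃ x : ℕ → ℝ,
      (∀ n : ℕ, 1 ≤ n → x n ∈ S ∧ x n < 1 / n) ∧
      (∀ F : Finset ℕ, F.Nonempty → (∀ n ∈ F, 1 ≤ n) → ∑ n ∈ F, x n ∈ A) := by
  have hsmall : ∀ n : ℕ, {y : ℝ | 1 ≤ n → y ∈ S ∧ y < 1 / n} ∈ p := by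
    intro n
    rcases Nat.eq_zero_or_pos n with rfl | hn
    · exact mem_of_superset univ_mem fun _ _ h => absurd h (by norm_num)
    · exact mem_of_superset (hzero _ (by positivity)) fun y hy _ => hy
  obtain ⟨x, hxS, hxA⟩ := exists_forall_mem_forall_sum_mem hidem hA hsmall
  exact ⟨x, hxS, fun F hF _ => hxA F hF⟩

/-- Finite sums theorem near zero: if `S` is a dense subsemigroup of `((0,∞),+)`,
`p` is an idempotent ultrafilter in `0⁺` (concentrated on `S`), and `A ∈ p`, then
there is a sequence `⟨x_n⟩_{n≥1}` in `S` with `x_n < 1/n` whose finite sums all lie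
in `A`. -/
theorem finite_sums_near_zero (S : Set ℝ)
    (hSpos : ∀ x ∈ S, 0 < x)
    (hSadd : ∀ x ∈ S, ∀ y ∈ S, x + y ∈ S)
    (hSdense : ∀ a b : ℝ, 0 ≤ a → a < b → ∃ s ∈ S, s ∈ Set.Ioo a b)
    (p : Ultrafilter ℝ) (hidem : p + p = p)
    (hzero : ∀ ε : ℝ, 0 < ε → {x | x ∈ S ∧ x < ε} ∈ p)
    (A : Set ℝ) (hAS : A ⊆ S) (hA : A ∈ p) :
    ∃ x : ℕ → ℝ,
      (∀ n : ℕ, 1 ≤ n → x n ∈ S ∧ x n < 1 / n) ∧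
      (∀ F : Finset ℕ, F.Nonempty → (∀ n ∈ F, 1 ≤ n) → ∑ n ∈ F, x n ∈ A) :=
  finite_sums_near_zero_general S p hidem hzero A hA
end
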